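/- arXiv:2009.12086 — 6 statements merged into one kernel-verified Lean document; each statement's English description precedes it below -/
import Mathlib

section
/- Let He_n denote the probabilists' Hermite polynomials and Q_n(x) = He_n(x)/√(n!) the normalized Hermite polynomials. Let e : ℕ → [0,∞) be a sequence with sup_{n≥1} n·e_n < ∞. Then the series Σ_{n=0}^∞ e_n Q_n(x) Q_n(y) converges absolutely for every fixed x, y ∈ ℝ, and the convergence is uniform for (x,y) ranging over compact subsets of ℝ². -/
open Polynomial

/-- The normalized probabilists' Hermite polynomials `Qₙ(x) = Heₙ(x)/√(n!)`,
orthonormal with respect to the standard Gaussian density. -/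
noncomputable def normHermite (n : ℕ) (x : ℝ) : ℝ :=
  (Polynomial.aeval x (Polynomial.hermite n)) / Real.sqrt (Nat.factorial n)

/-!
The mean `m_n(x) = (n + 1)⁻¹ ∑_{k ≤ n} Q_k(x)²` has, by the three-term recurrence
`√(n+2) Q_{n+2} = x Q_{n+1} - √(n+1) Q_n`, the closed form
`m_n = Q_n² + Q_{n+1}² - x Q_n Q_{n+1} / √(n+1)`. So once `8|x| ≤ √(n+1)` the mean is
comparable to `Q_n² + Q_{n+1}²`, and the recurrence turns
`m_{n+2} = ((n+1) m_n + Q_{n+1}² + Q_{n+2}²)/(n+3)` into the contraction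
`m_{n+2} ≤ (1 - 2/(3(n+3))) m_n`. Telescoping it shows that `∑ₙ sup_{[-R,R]} Q_n² / (n+1)`
is finite, which dominates `∑ₙ eₙ sup_{[-R,R]} Q_n²` when `eₙ = O(1/n)`; the Weierstrass
M-test does the rest.
-/

open scoped Nat

theorem derivative_hermite_succ (n : ℕ) :
    derivative (hermite (n + 1)) = C ((n : ℤ) + 1) * hermite n := by
  induction n with
  | zero => simp [hermite_zero]
  | succ n ih =>
    rw [hermite_succ (n + 1), derivative_sub, derivative_mul, derivative_X, one_mul, ih,
      derivative_mul, derivative_C, zero_mul, zero_add, hermite_succ n]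
    simp only [C_add, C_1, Nat.cast_add, Nat.cast_one]
    ring

theorem aeval_hermite_succ_succ (n : ℕ) (x : ℝ) :
    aeval x (hermite (n + 2)) =
      x * aeval x (hermite (n + 1)) - (n + 1) * aeval x (hermite n) := by
  rw [hermite_succ (n + 1), map_sub, map_mul, aeval_X, derivative_hermite_succ, map_mul,
    aeval_C]
  push_cast
  ring

theorem sqrt_factorial_succ (n : ℕ) :
    √((n + 1)! : ℝ) = √((n : ℝ) + 1) * √(n ! : ℝ) := by
  rw [← Real.sqrt_mul (by positivity), Nat.factorial_succ]
  push_cast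
  ring

theorem normHermite_succ_succ (n : ℕ) (x : ℝ) :
    √((n : ℝ) + 2) * normHermite (n + 2) x =
      x * normHermite (n + 1) x - √((n : ℝ) + 1) * normHermite n x := by
  have hs : √((n : ℝ) + 1) ^ 2 = n + 1 := Real.sq_sqrt (by positivity)
  simp only [normHermite, aeval_hermite_succ_succ, sqrt_factorial_succ]
  push_cast
  rw [show (n : ℝ) + 1 + 1 = n + 2 by ring]
  field_simp
  rw [hs]
  ring

theorem normHermite_zero (x : ℝ) : normHermite 0 x = 1 := by
  simp [normHermite, hermite_zero]

theorem normHermite_one (x : ℝ) : normHermite 1 x = x := by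
  simp [normHermite]

theorem sum_range_sq_normHermite (n : ℕ) (x : ℝ) :
    ∑ k ∈ Finset.range (n + 1), normHermite k x ^ 2 =
      (n + 1) * (normHermite n x ^ 2 + normHermite (n + 1) x ^ 2)
        - √((n : ℝ) + 1) * x * normHermite n x * normHermite (n + 1) x := by
  induction n with
  | zero => simp [normHermite_zero, normHermite_one]; ring
  | succ n ih =>
    rw [Finset.sum_range_succ, ih]
    have hs : √((n : ℝ) + 1) ^ 2 = n + 1 := Real.sq_sqrt (by positivity)
    have ht : √((n : ℝ) + 2) ^ 2 = n + 2 := Real.sq_sqrt (by positivity)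
    have hrec := normHermite_succ_succ n x
    push_cast
    rw [show (n : ℝ) + 1 + 1 = n + 2 by ring]
    linear_combination
      (√((n : ℝ) + 1) * normHermite n x - √((n : ℝ) + 2) * normHermite (n + 2) x) * hrec
        - normHermite n x ^ 2 * hs + normHermite (n + 2) x ^ 2 * ht

noncomputable def hermiteMeanSq (n : ℕ) (x : ℝ) : ℝ :=
  (∑ k ∈ Finset.range (n + 1), normHermite k x ^ 2) / (n + 1)

theorem hermiteMeanSq_nonneg (n : ℕ) (x : ℝ) : 0 ≤ hermiteMeanSq n x := by
  unfold hermiteMeanSq; positivity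

@[fun_prop]
theorem continuous_normHermite (n : ℕ) : Continuous (normHermite n) :=
  (Polynomial.continuous_aeval (hermite n)).div_const _

theorem continuous_hermiteMeanSq (n : ℕ) : Continuous (hermiteMeanSq n) := by
  unfold hermiteMeanSq
  fun_prop

section LargeDegree

variable {n : ℕ} {x : ℝ}

theorem abs_mul_mul_mul_le_of_eight_mul_abs_le {s a b : ℝ} (hs : 0 ≤ s) (hx : 8 * |x| ≤ s) :
    |s * x * a * b| ≤ s ^ 2 * (a ^ 2 + b ^ 2) / 16 := by
  rw [abs_mul, abs_mul, abs_mul, abs_of_nonneg hs]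
  have hab : |a| * |b| ≤ (a ^ 2 + b ^ 2) / 2 := by
    nlinarith [sq_nonneg (|a| - |b|), sq_abs a, sq_abs b]
  have hsx : s * |x| ≤ s ^ 2 / 8 := by nlinarith
  calc s * |x| * |a| * |b| = (s * |x|) * (|a| * |b|) := by ring
    _ ≤ s ^ 2 / 8 * ((a ^ 2 + b ^ 2) / 2) := by gcongr
    _ = s ^ 2 * (a ^ 2 + b ^ 2) / 16 := by ring

theorem sq_add_sq_le_hermiteMeanSq (hx : 8 * |x| ≤ √((n : ℝ) + 1)) :
    15 / 16 * (normHermite n x ^ 2 + normHermite (n + 1) x ^ 2) ≤ hermiteMeanSq n x := by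
  have hs : √((n : ℝ) + 1) ^ 2 = n + 1 := Real.sq_sqrt (by positivity)
  have hcross := abs_mul_mul_mul_le_of_eight_mul_abs_le (a := normHermite n x)
    (b := normHermite (n + 1) x) (Real.sqrt_nonneg _) hx
  rw [hermiteMeanSq, sum_range_sq_normHermite, le_div_iff₀ (by positivity)]
  rw [hs] at hcross
  nlinarith [le_abs_self (√((n : ℝ) + 1) * x * normHermite n x * normHermite (n + 1) x)]

theorem sq_add_sq_normHermite_succ_le (hx : 8 * |x| ≤ √((n : ℝ) + 1)) :
    normHermite (n + 1) x ^ 2 + normHermite (n + 2) x ^ 2 ≤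
      5 / 4 * (normHermite n x ^ 2 + normHermite (n + 1) x ^ 2) := by
  set a := normHermite n x
  set b := normHermite (n + 1) x
  set c := normHermite (n + 2) x
  set s := √((n : ℝ) + 1)
  have hs : s ^ 2 = n + 1 := Real.sq_sqrt (by positivity)
  have ht : √((n : ℝ) + 2) ^ 2 = n + 2 := Real.sq_sqrt (by positivity)
  have hcross := abs_mul_mul_mul_le_of_eight_mul_abs_le (a := a) (b := b) (Real.sqrt_nonneg _) hx
  have hxb : (x * b) ^ 2 ≤ s ^ 2 * b ^ 2 / 64 := by
    have : |x| ^ 2 ≤ s ^ 2 / 64 := by nlinarith [abs_nonneg x]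
    rw [mul_pow, ← sq_abs x]
    nlinarith [sq_nonneg b]
  have hc : (n + 2) * c ^ 2 = (x * b - s * a) ^ 2 := by
    rw [← normHermite_succ_succ, mul_pow, ht]
  nlinarith [neg_abs_le (s * x * a * b), sq_nonneg c, sq_nonneg a, sq_nonneg b]

theorem hermiteMeanSq_add_two_le (hx : 8 * |x| ≤ √((n : ℝ) + 1)) :
    hermiteMeanSq (n + 2) x ≤ (1 - 2 / (3 * (n + 3))) * hermiteMeanSq n x := by
  have hsum : (n + 3) * hermiteMeanSq (n + 2) x = (n + 1) * hermiteMeanSq n x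
      + (normHermite (n + 1) x ^ 2 + normHermite (n + 2) x ^ 2) := by
    simp only [hermiteMeanSq, Finset.sum_range_succ (n := n + 2),
      Finset.sum_range_succ (n := n + 1)]
    push_cast
    field_simp
    ring
  have hstep := sq_add_sq_normHermite_succ_le hx
  have hmean := sq_add_sq_le_hermiteMeanSq hx
  have h1 : (1 - 2 / (3 * ((n : ℝ) + 3))) = (3 * n + 7) / (3 * (n + 3)) := by
    field_simp; ring
  rw [h1, div_mul_eq_mul_div, le_div_iff₀ (by positivity)]
  nlinarith

end LargeDegree

theorem summable_of_add_le_two_step {a w : ℕ → ℝ} (ha : ∀ n, 0 ≤ a n)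
    (hw : ∀ n, 0 ≤ w n) (h : ∀ n, a n + w (n + 2) ≤ w n) : Summable a := by
  have htele : ∀ K, ∑ k ∈ Finset.range K, a k + (w K + w (K + 1)) ≤ w 0 + w 1 := by
    intro K
    induction K with
    | zero => simp
    | succ K ih => rw [Finset.sum_range_succ]; linarith [h K]
  exact summable_of_sum_range_le (c := w 0 + w 1) ha fun K => by
    linarith [htele K, hw K, hw (K + 1)]

section SupOnIcc

variable {f : ℝ → ℝ} {R : ℝ}

theorem le_sSup_image_Icc (hf : Continuous f) {x : ℝ} (hx : |x| ≤ R) :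
    f x ≤ sSup (f '' Set.Icc (-R) R) :=
  le_csSup (isCompact_Icc.bddAbove_image hf.continuousOn) ⟨x, abs_le.mp hx, rfl⟩

theorem sSup_image_Icc_le (hR : 0 ≤ R) {b : ℝ} (h : ∀ x, |x| ≤ R → f x ≤ b) :
    sSup (f '' Set.Icc (-R) R) ≤ b :=
  csSup_le ((Set.nonempty_Icc.2 (by linarith)).image f) <| by
    rintro _ ⟨x, hx, rfl⟩
    exact h x (abs_le.mpr hx)

theorem sSup_image_Icc_nonneg (hf : Continuous f) (hf0 : ∀ x, 0 ≤ f x) (hR : 0 ≤ R) :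
    0 ≤ sSup (f '' Set.Icc (-R) R) :=
  (hf0 0).trans (le_sSup_image_Icc hf (by simpa using hR))

end SupOnIcc

theorem summable_sSup_sq_normHermite_div {R : ℝ} (hR : 0 ≤ R) :
    Summable fun n : ℕ => sSup ((fun x => normHermite n x ^ 2) '' Set.Icc (-R) R) / (n + 1) := by
  set D := fun n : ℕ => sSup ((fun x => normHermite n x ^ 2) '' Set.Icc (-R) R)
  set M := fun n : ℕ => sSup (hermiteMeanSq n '' Set.Icc (-R) R)
  set N := ⌈64 * R ^ 2⌉₊
  have hlarge : ∀ n, N ≤ n → ∀ x, |x| ≤ R → 8 * |x| ≤ √((n : ℝ) + 1) := by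
    intro n hn x hx
    have hn' : 64 * R ^ 2 ≤ n := Nat.ceil_le.mp hn
    rw [Real.le_sqrt (by positivity) (by positivity)]
    nlinarith [abs_nonneg x]
  have hM0 : ∀ n, 0 ≤ M n := fun n =>
    sSup_image_Icc_nonneg (continuous_hermiteMeanSq n) (hermiteMeanSq_nonneg n) hR
  have hMrec : ∀ n, N ≤ n → M (n + 2) ≤ (1 - 2 / (3 * (n + 3))) * M n := by
    intro n hn
    have hcoef : 0 ≤ 1 - 2 / (3 * ((n : ℝ) + 3)) := by
      rw [sub_nonneg, div_le_one (by positivity)]; linarith [(n.cast_nonneg : (0 : ℝ) ≤ n)]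
    refine sSup_image_Icc_le hR fun x hx => ?_
    exact (hermiteMeanSq_add_two_le (hlarge n hn x hx)).trans
      (mul_le_mul_of_nonneg_left (le_sSup_image_Icc (continuous_hermiteMeanSq n) hx) hcoef)
  have hDM : ∀ n, N ≤ n → D n ≤ 16 / 15 * M n := by
    intro n hn
    refine sSup_image_Icc_le hR fun x hx => ?_
    have hmean := sq_add_sq_le_hermiteMeanSq (hlarge n hn x hx)
    have hsup := le_sSup_image_Icc (continuous_hermiteMeanSq n) hx
    nlinarith [sq_nonneg (normHermite (n + 1) x)]
  have hsum : Summable fun k : ℕ => 2 / (3 * ((N + k : ℕ) + 3)) * M (N + k) := by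
    refine summable_of_add_le_two_step (fun k => mul_nonneg (by positivity) (hM0 (N + k)))
      (fun k => hM0 (N + k)) fun k => ?_
    have := hMrec (N + k) (Nat.le_add_right N k)
    rw [← add_assoc]
    linarith
  rw [← summable_nat_add_iff N]
  refine (hsum.mul_left 8).of_nonneg_of_le (fun k => ?_) fun k => ?_
  · exact div_nonneg (sSup_image_Icc_nonneg (by fun_prop) (fun x => sq_nonneg _) hR)
      (by positivity)
  · have hm : (0 : ℝ) ≤ (N + k : ℕ) := Nat.cast_nonneg _
    have hD := hDM (N + k) (Nat.le_add_right N k)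
    have hM := hM0 (N + k)
    simp only [add_comm k N]
    rw [div_le_iff₀ (by positivity)]
    field_simp
    nlinarith

theorem abs_mul_normHermite_mul_normHermite_le {c R x y : ℝ} (hc : 0 ≤ c) (hx : |x| ≤ R)
    (hy : |y| ≤ R) (n : ℕ) :
    |c * normHermite n x * normHermite n y| ≤
      c * sSup ((fun x => normHermite n x ^ 2) '' Set.Icc (-R) R) := by
  have hcont : Continuous fun x => normHermite n x ^ 2 := by fun_prop
  have hDx := le_sSup_image_Icc hcont hx
  have hDy := le_sSup_image_Icc hcont hy
  rw [mul_assoc, abs_mul, abs_of_nonneg hc, abs_mul]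
  refine mul_le_mul_of_nonneg_left ?_ hc
  nlinarith [sq_nonneg (|normHermite n x| - |normHermite n y|), sq_abs (normHermite n x),
    sq_abs (normHermite n y)]

theorem summable_mul_sSup_sq_normHermite {e : ℕ → ℝ} (he0 : ∀ n, 0 ≤ e n) {C : ℝ}
    (hC : ∀ n : ℕ, (n + 1) * e n ≤ C) {R : ℝ} (hR : 0 ≤ R) :
    Summable fun n => e n * sSup ((fun x => normHermite n x ^ 2) '' Set.Icc (-R) R) := by
  refine ((summable_sSup_sq_normHermite_div hR).mul_left C).of_nonneg_of_le (fun n => ?_)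
    fun n => ?_
  · exact mul_nonneg (he0 n) (sSup_image_Icc_nonneg (by fun_prop) (fun x => sq_nonneg _) hR)
  · have hD := sSup_image_Icc_nonneg (f := fun x => normHermite n x ^ 2) (by fun_prop)
      (fun x => sq_nonneg _) hR
    have he : e n ≤ C / (n + 1) := by
      rw [le_div_iff₀ (by positivity), mul_comm]
      exact hC n
    calc e n * _ ≤ C / (n + 1) * _ := by gcongr
      _ = _ := by ring

/-- **Convergence of Hermite bilinear series.**
If `e : ℕ → [0,∞)` satisfies `sup_{n ≥ 1} n · eₙ < ∞`, then the series
`Σₙ eₙ Qₙ(x) Qₙ(y)` converges absolutely for every fixed `x, y ∈ ℝ`, and the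
convergence is uniform on compact subsets of `ℝ²`. -/
theorem stmt2 (e : ℕ → ℝ) (he0 : ∀ n, 0 ≤ e n)
    (hbd : ∃ C : ℝ, ∀ n : ℕ, 1 ≤ n → (n : ℝ) * e n ≤ C) :
    (∀ x y : ℝ, Summable fun n => |e n * normHermite n x * normHermite n y|) ∧
    ∀ K : Set (ℝ × ℝ), IsCompact K →
      TendstoUniformlyOn
        (fun (N : ℕ) (q : ℝ × ℝ) =>
          ∑ n ∈ Finset.range N, e n * normHermite n q.1 * normHermite n q.2)
        (fun q => ∑' n : ℕ, e n * normHermite n q.1 * normHermite n q.2)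
        Filter.atTop K := by
  obtain ⟨C, hC⟩ := hbd
  have hC' : ∀ n : ℕ, ((n : ℝ) + 1) * e n ≤ 2 * C + e 0 := by
    intro n
    rcases Nat.eq_zero_or_pos n with rfl | hn
    · have h1 := hC 1 le_rfl
      rw [Nat.cast_one, one_mul] at h1
      rw [Nat.cast_zero, zero_add, one_mul]
      linarith [he0 1]
    · have := hC n hn
      have : e n ≤ n * e n := le_mul_of_one_le_left (he0 n) (by exact_mod_cast hn)
      linarith [he0 0, add_one_mul (n : ℝ) (e n)]
  have hsummable (R : ℝ) (hR : 0 ≤ R) := summable_mul_sSup_sq_normHermite he0 hC' hR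
  refine ⟨fun x y => ?_, fun K hK => ?_⟩
  · exact (hsummable _ (by positivity : 0 ≤ max |x| |y|)).of_nonneg_of_le (fun n => abs_nonneg _)
      fun n => abs_mul_normHermite_mul_normHermite_le (he0 n) (le_max_left _ _)
        (le_max_right _ _) n
  · obtain ⟨R, hR, hKR⟩ := hK.isBounded.exists_pos_norm_le
    refine tendstoUniformlyOn_tsum_nat (hsummable R hR.le) fun n q hq => ?_
    exact abs_mul_normHermite_mul_normHermite_le (he0 n)
      ((norm_fst_le q).trans (hKR q hq)) ((norm_snd_le q).trans (hKR q hq)) n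
end

section
/- Let X be a Banach space and (T(t))_{t≥0} a uniformly bounded strongly continuous semigroup of bounded linear operators on X with sup_{t≥0} ‖T(t)‖ ≤ M. Let f : (0,∞) × (0,∞) → [0,∞) be jointly measurable such that for each t > 0 the function s ↦ f(s,t) is a probability density on (0,∞); assume moreover that for every bounded continuous h : [0,∞) → ℝ the map t ↦ ∫₀^∞ h(s) f(s,t) ds is continuous on (0,∞) and tends to h(0) as t → 0⁺. Define T_Φ(t)u = ∫₀^∞ T(s)u f(s,t) ds (Bochner integral) for t > 0 and T_Φ(0)u = u. Then for every u ∈ X the Bochner integral exists, ‖T_Φ(t)u‖ ≤ M‖u‖ for all t ≥ 0, and the map t ↦ T_Φ(t)u is continuous from [0,∞) to X. -/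
/-!
Write `μₜ` for the probability measure with density `f(·,t)` on `(0,∞)`, put `μ₀ = δ₀`, and
extend `s ↦ T(s)u` to a bounded continuous `g` on `ℝ`; then `T_Φ(t)u = ∫ g dμₜ`, and the bound
is `‖∫ g dμₜ‖ ≤ sup ‖g‖ ≤ M‖u‖`. The hypotheses on `f` say that `t ↦ μₜ` is continuous on
`[0,∞)` for the weak topology, so continuity of `T_Φ(·)u` reduces to continuity of `ν ↦ ∫ g dν`
for a Banach-valued bounded continuous `g`. For that, take a compact `K` with `ν₀(Kᶜ) < δ` and a
finite partition of unity `ρᵢ` on `K` subordinate to sets on which `g` oscillates by less than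
`δ`. Then `‖g - ∑ ρᵢ • g(yᵢ)‖ ≤ δ + ‖g‖ (1 - ∑ ρᵢ)`; the finite-rank part has scalar
coefficients `∫ ρᵢ dν`, continuous in `ν`, and the error integrates to less than `δ (1 + 2‖g‖)`
for `ν` near `ν₀`.
-/

open MeasureTheory Set Filter
open scoped BoundedContinuousFunction Topology

namespace PartitionOfUnity

variable {ι Y : Type*} [Fintype ι] [TopologicalSpace Y] {K : Set Y} (ρ : PartitionOfUnity ι Y K)

lemma one_sub_sum_mem_Icc (y : Y) : 1 - ∑ i, ρ i y ∈ Icc (0 : ℝ) 1 := by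
  rw [← finsum_eq_sum_of_fintype]
  exact ⟨sub_nonneg.2 (ρ.sum_le_one y), sub_le_self _ (ρ.sum_nonneg y)⟩

lemma one_sub_sum_eqOn_zero : EqOn (fun y => 1 - ∑ i, ρ i y) 0 K := fun y hy => by
  simp only [← finsum_eq_sum_of_fintype, ρ.sum_eq_one hy, sub_self, Pi.zero_apply]

end PartitionOfUnity

lemma exists_partitionOfUnity_norm_sub_sum_smul_le {Y E : Type*} [TopologicalSpace Y]
    [T2Space Y] [NormalSpace Y] [NormedAddCommGroup E] [NormedSpace ℝ E] {K : Set Y}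
    (hK : IsCompact K) {g : Y → E} (hg : Continuous g) {ε : ℝ} (hε : 0 < ε) :
    ∃ (s : Finset Y) (ρ : PartitionOfUnity s Y K),
      ∀ y, ‖g y - ∑ i, ρ i y • g i‖ ≤ ε + (1 - ∑ i, ρ i y) * ‖g y‖ := by
  obtain ⟨s, hs⟩ := hK.elim_finite_subcover (fun i => g ⁻¹' Metric.ball (g i) ε)
    (fun i => Metric.isOpen_ball.preimage hg)
    fun y _ => mem_iUnion.2 ⟨y, Metric.mem_ball_self hε⟩
  obtain ⟨ρ, hρ⟩ := PartitionOfUnity.exists_isSubordinate_of_locallyFinite hK.isClosed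
    (fun i : s => g ⁻¹' Metric.ball (g i) ε) (fun i => Metric.isOpen_ball.preimage hg)
    (locallyFinite_of_finite _) (by simpa [iUnion_subtype] using hs)
  refine ⟨s, ρ, fun y => ?_⟩
  have hsum : 0 ≤ 1 - ∑ i, ρ i y := (ρ.one_sub_sum_mem_Icc y).1
  have hclose : ∀ i, ‖ρ i y • (g y - g i)‖ ≤ ρ i y * ε := fun i => by
    rw [norm_smul, Real.norm_of_nonneg (ρ.nonneg i y)]
    rcases (ρ.nonneg i y).eq_or_lt with hzero | hpos
    · simp [← hzero]
    · have : y ∈ g ⁻¹' Metric.ball (g i) ε := hρ i (subset_tsupport _ hpos.ne')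
      exact mul_le_mul_of_nonneg_left (mem_ball_iff_norm.1 this).le hpos.le
  calc ‖g y - ∑ i, ρ i y • g i‖
      = ‖(1 - ∑ i, ρ i y) • g y + ∑ i, ρ i y • (g y - g i)‖ := by
        simp only [sub_smul, one_smul, Finset.sum_smul, smul_sub, Finset.sum_sub_distrib]
        abel_nf
    _ ≤ (1 - ∑ i, ρ i y) * ‖g y‖ + ∑ i, ρ i y * ε := by
        refine (norm_add_le _ _).trans (add_le_add ?_ ((norm_sum_le _ _).trans
          (Finset.sum_le_sum fun i _ => hclose i)))
        rw [norm_smul, Real.norm_of_nonneg hsum]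
    _ ≤ ε + (1 - ∑ i, ρ i y) * ‖g y‖ := by
        rw [← Finset.sum_mul]
        linarith [mul_le_of_le_one_left hε.le (sub_nonneg.1 hsum)]

lemma norm_integral_sub_sum_smul_le {Y E ι : Type*} [MeasurableSpace Y] [NormedAddCommGroup E]
    [NormedSpace ℝ E] [CompleteSpace E] {ν : Measure Y} [IsProbabilityMeasure ν] {g : Y → E}
    (hg : Integrable g ν) (s : Finset ι) {φ : ι → Y → ℝ} (hφ : ∀ i, Integrable (φ i) ν)
    (x : ι → E) {e : Y → ℝ} (he : Integrable e ν) {δ c : ℝ}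
    (h : ∀ y, ‖g y - ∑ i ∈ s, φ i y • x i‖ ≤ δ + c * e y) :
    ‖∫ y, g y ∂ν - ∑ i ∈ s, (∫ y, φ i y ∂ν) • x i‖ ≤ δ + c * ∫ y, e y ∂ν := by
  have hsum : ∑ i ∈ s, (∫ y, φ i y ∂ν) • x i = ∫ y, ∑ i ∈ s, φ i y • x i ∂ν := by
    rw [integral_finsetSum _ fun i _ => (hφ i).smul_const (x i)]
    exact Finset.sum_congr rfl fun i _ => (integral_smul_const _ _).symm
  have hφx : Integrable (fun y => ∑ i ∈ s, φ i y • x i) ν :=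
    integrable_finsetSum _ fun i _ => (hφ i).smul_const (x i)
  calc ‖∫ y, g y ∂ν - ∑ i ∈ s, (∫ y, φ i y ∂ν) • x i‖
      = ‖∫ y, (g y - ∑ i ∈ s, φ i y • x i) ∂ν‖ := by rw [hsum, integral_sub hg hφx]
    _ ≤ ∫ y, (δ + c * e y) ∂ν :=
        norm_integral_le_of_norm_le ((integrable_const δ).add (he.const_mul c)) (ae_of_all _ h)
    _ = δ + c * ∫ y, e y ∂ν := by
        rw [integral_add (integrable_const δ) (he.const_mul c), integral_const_mul]
        simp

lemma integral_le_measureReal_compl_of_eqOn_zero {Y : Type*} [MeasurableSpace Y]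
    {ν : Measure Y} [IsFiniteMeasure ν] {K : Set Y} (hK : MeasurableSet K) {e : Y → ℝ}
    (he : AEStronglyMeasurable e ν) (he01 : ∀ y, e y ∈ Icc (0 : ℝ) 1) (heK : EqOn e 0 K) :
    ∫ y, e y ∂ν ≤ ν.real Kᶜ := by
  have he_le : e ≤ Kᶜ.indicator 1 := fun y => by
    by_cases hy : y ∈ K
    · simp [hy, heK hy]
    · simpa [hy] using (he01 y).2
  have he_norm : ∀ y, ‖e y‖ ≤ 1 := fun y => by
    rw [Real.norm_of_nonneg (he01 y).1]; exact (he01 y).2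
  calc ∫ y, e y ∂ν ≤ ∫ y, Kᶜ.indicator 1 y ∂ν :=
        integral_mono (.of_bound he 1 (ae_of_all _ he_norm))
          ((integrable_const 1).indicator hK.compl) he_le
    _ = ν.real Kᶜ := integral_indicator_one hK.compl

namespace MeasureTheory.ProbabilityMeasure

variable {Y : Type*} [TopologicalSpace Y] [MeasurableSpace Y] [OpensMeasurableSpace Y]

lemma continuous_integral_of_norm_le {h : Y → ℝ} (hh : Continuous h) {C : ℝ}
    (hC : ∀ y, ‖h y‖ ≤ C) : Continuous fun ν : ProbabilityMeasure Y => ∫ y, h y ∂ν :=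
  continuous_integral_boundedContinuousFunction (.ofNormedAddCommGroup h hh C hC)

variable [SecondCountableTopology Y] [T2Space Y] [NormalSpace Y]
  {E : Type*} [NormedAddCommGroup E] [NormedSpace ℝ E] [CompleteSpace E]

theorem continuousAt_integral_of_isTightMeasureSet (g : Y →ᵇ E) {ν₀ : ProbabilityMeasure Y}
    (hν₀ : IsTightMeasureSet {(ν₀ : Measure Y)}) :
    ContinuousAt (fun ν : ProbabilityMeasure Y => ∫ y, g y ∂ν) ν₀ := by
  refine continuousAt_of_locally_uniform_approx_of_continuousAt fun U hU => ?_
  obtain ⟨ε, hε, hεU⟩ := Metric.mem_uniformity_dist.1 hU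
  set δ := ε / (2 + 2 * ‖g‖) with hδ_def
  have hδ : 0 < δ := by positivity
  obtain ⟨K, hK, hKν⟩ := isTightMeasureSet_iff_exists_isCompact_measure_compl_le.1 hν₀
    (ENNReal.ofReal δ) (by positivity)
  obtain ⟨s, ρ, hρ⟩ := exists_partitionOfUnity_norm_sub_sum_smul_le hK g.continuous hδ
  set e : Y → ℝ := fun y => 1 - ∑ i, ρ i y
  have he_cont : Continuous e := by fun_prop
  have he_mem : ∀ y, e y ∈ Icc (0 : ℝ) 1 := ρ.one_sub_sum_mem_Icc
  have he_norm : ∀ y, ‖e y‖ ≤ 1 := fun y => by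
    rw [Real.norm_of_nonneg (he_mem y).1]; exact (he_mem y).2
  have hρ_norm : ∀ i y, ‖ρ i y‖ ≤ 1 := fun i y => by
    rw [Real.norm_of_nonneg (ρ.nonneg i y)]; exact ρ.le_one i y
  have he_ν₀ : ∫ y, e y ∂ν₀ < 2 * δ :=
    calc ∫ y, e y ∂ν₀ ≤ (ν₀ : Measure Y).real Kᶜ :=
          integral_le_measureReal_compl_of_eqOn_zero hK.isClosed.measurableSet
            he_cont.aestronglyMeasurable he_mem ρ.one_sub_sum_eqOn_zero
      _ ≤ δ := ENNReal.toReal_le_of_le_ofReal hδ.le (hKν _ rfl)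
      _ < 2 * δ := by linarith
  refine ⟨{ν | ∫ y, e y ∂ν < 2 * δ},
    (isOpen_lt (continuous_integral_of_norm_le he_cont he_norm) continuous_const).mem_nhds he_ν₀,
    fun ν => ∑ i, (∫ y, ρ i y ∂ν) • g i, (continuous_finsetSum _ fun i _ =>
      (continuous_integral_of_norm_le (ρ i).continuous (hρ_norm i)).smul
        continuous_const).continuousAt, fun ν hν => hεU ?_⟩
  rw [dist_eq_norm]
  calc ‖∫ y, g y ∂ν - ∑ i, (∫ y, ρ i y ∂ν) • g i‖ ≤ δ + ‖g‖ * ∫ y, e y ∂ν :=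
        norm_integral_sub_sum_smul_le
          (.of_bound g.continuous.aestronglyMeasurable ‖g‖ (ae_of_all _ g.norm_coe_le_norm)) _
          (fun i => .of_bound (ρ i).continuous.aestronglyMeasurable 1 (ae_of_all _ (hρ_norm i)))
          _ (.of_bound he_cont.aestronglyMeasurable 1 (ae_of_all _ he_norm))
          fun y => (hρ y).trans <| by
            rw [mul_comm]; gcongr; exacts [(he_mem y).1, g.norm_coe_le_norm y]
    _ ≤ δ + ‖g‖ * (2 * δ) := by gcongr; exact le_of_lt hν
    _ < ε := by
        rw [hδ_def]
        field_simp
        nlinarith [norm_nonneg g]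

end MeasureTheory.ProbabilityMeasure

lemma exists_boundedContinuousFunction_eqOn_Ici {E : Type*} [NormedAddCommGroup E] {φ : ℝ → E}
    {a C : ℝ} (hφ : ContinuousOn φ (Ici a)) (hC : ∀ s ∈ Ici a, ‖φ s‖ ≤ C) :
    ∃ g : ℝ →ᵇ E, EqOn g φ (Ici a) ∧ ∀ s, ‖g s‖ ≤ C :=
  ⟨.ofNormedAddCommGroup (fun s => φ (max s a))
      (hφ.comp_continuous (by fun_prop) fun s => le_max_right s a) C
      fun s => hC _ (le_max_right s a),
    fun s hs => by simp [max_eq_left (mem_Ici.1 hs)], fun s => hC _ (le_max_right s a)⟩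

/-- The law of the inverse subordinator `L_Φ(t)`, with density `f (·, t)` on `(0, ∞)`. For
`t ≤ 0` it is `δ₀`, the weak limit as `t → 0⁺`, so that `T_Φ(t) u = ∫ T(s) u dμₜ` also holds at
`t = 0`. -/
noncomputable def subordinationMeasure (f : ℝ → ℝ → ℝ) (t : ℝ) : Measure ℝ :=
  if 0 < t then (volume.restrict (Ioi 0)).withDensity fun s => ENNReal.ofReal (f s t)
  else Measure.dirac 0

section subordinationMeasure

variable {f : ℝ → ℝ → ℝ}

lemma isProbabilityMeasure_subordinationMeasure (hf0 : ∀ s t, 0 ≤ f s t)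
    (hf1 : ∀ t, 0 < t → ∫ s in Ioi (0:ℝ), f s t = 1) (t : ℝ) :
    IsProbabilityMeasure (subordinationMeasure f t) := by
  by_cases ht : 0 < t
  · refine ⟨?_⟩
    rw [subordinationMeasure, if_pos ht, withDensity_apply _ MeasurableSet.univ,
      Measure.restrict_univ, ← ofReal_integral_eq_lintegral_ofReal, hf1 t ht, ENNReal.ofReal_one]
    · exact .of_integral_ne_zero (by rw [hf1 t ht]; exact one_ne_zero)
    · exact ae_of_all _ fun s => hf0 s t
  · rw [subordinationMeasure, if_neg ht]
    infer_instance

variable {E : Type*} [NormedAddCommGroup E] [NormedSpace ℝ E]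

lemma integrable_subordinationMeasure_iff (hfmeas : Measurable fun q : ℝ × ℝ => f q.1 q.2)
    (hf0 : ∀ s t, 0 ≤ f s t) {t : ℝ} (ht : 0 < t) {g : ℝ → E} :
    Integrable g (subordinationMeasure f t) ↔ IntegrableOn (fun s => f s t • g s) (Ioi 0) := by
  rw [subordinationMeasure, if_pos ht]
  have h := integrable_withDensity_iff_integrable_smul (μ := volume.restrict (Ioi 0)) (g := g)
    (show Measurable fun s => (f s t).toNNReal by fun_prop)
  simp only [NNReal.smul_def, Real.coe_toNNReal _ (hf0 _ t)] at h
  exact h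

lemma integral_subordinationMeasure_of_pos (hfmeas : Measurable fun q : ℝ × ℝ => f q.1 q.2)
    (hf0 : ∀ s t, 0 ≤ f s t) {t : ℝ} (ht : 0 < t) (g : ℝ → E) :
    ∫ s, g s ∂subordinationMeasure f t = ∫ s in Ioi 0, f s t • g s := by
  rw [subordinationMeasure, if_pos ht]
  have h := integral_withDensity_eq_integral_smul (μ := volume.restrict (Ioi 0))
    (show Measurable fun s => (f s t).toNNReal by fun_prop) g
  simp only [NNReal.smul_def, Real.coe_toNNReal _ (hf0 _ t)] at h
  exact h

lemma integral_subordinationMeasure_of_nonpos [CompleteSpace E] {t : ℝ} (ht : t ≤ 0)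
    (g : ℝ → E) :
    ∫ s, g s ∂subordinationMeasure f t = g 0 := by
  rw [subordinationMeasure, if_neg ht.not_gt, integral_dirac]

theorem continuousOn_subordinationMeasure (hfmeas : Measurable fun q : ℝ × ℝ => f q.1 q.2)
    (hf0 : ∀ s t, 0 ≤ f s t) {μ : ℝ → ProbabilityMeasure ℝ}
    (hμ : ∀ t, (μ t : Measure ℝ) = subordinationMeasure f t)
    (hcont : ∀ h : ℝ →ᵇ ℝ, ContinuousOn (fun t => ∫ s in Ioi (0:ℝ), h s * f s t) (Ioi 0))
    (hlim : ∀ h : ℝ →ᵇ ℝ,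
      Tendsto (fun t => ∫ s in Ioi (0:ℝ), h s * f s t) (𝓝[>] 0) (𝓝 (h 0))) :
    ContinuousOn μ (Ici 0) := by
  have heq (h : ℝ →ᵇ ℝ) :
      EqOn (fun t => ∫ s, h s ∂(μ t)) (fun t => ∫ s in Ioi (0:ℝ), h s * f s t) (Ioi 0) :=
    fun t ht => by
      simp only [hμ, integral_subordinationMeasure_of_pos hfmeas hf0 ht, smul_eq_mul, mul_comm]
  intro t ht
  rcases (mem_Ici.1 ht).eq_or_lt with rfl | ht
  · rw [← continuousWithinAt_Ioi_iff_Ici, ContinuousWithinAt,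
      ProbabilityMeasure.tendsto_iff_forall_integral_tendsto]
    intro h
    rw [hμ, integral_subordinationMeasure_of_nonpos le_rfl]
    exact (hlim h).congr' (eventually_nhdsWithin_of_forall fun t ht => (heq h ht).symm)
  · refine ContinuousAt.continuousWithinAt ?_
    rw [ContinuousAt, ProbabilityMeasure.tendsto_iff_forall_integral_tendsto]
    exact fun h => ((hcont h).congr (heq h)).continuousAt (Ioi_mem_nhds ht)

end subordinationMeasure

theorem stmt5_general
    {X : Type*} [NormedAddCommGroup X] [NormedSpace ℝ X] [CompleteSpace X]
    (T : ℝ → X →L[ℝ] X) (M : ℝ)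
    (hT0 : T 0 = ContinuousLinearMap.id ℝ X)
    (hTbd : ∀ t : ℝ, 0 ≤ t → ‖T t‖ ≤ M)
    (hTcont : ∀ u : X, ContinuousOn (fun t => T t u) (Set.Ici 0))
    (f : ℝ → ℝ → ℝ)
    (hfmeas : Measurable fun q : ℝ × ℝ => f q.1 q.2)
    (hf0 : ∀ s t : ℝ, 0 ≤ f s t)
    (hf1 : ∀ t : ℝ, 0 < t → ∫ s in Set.Ioi (0:ℝ), f s t = 1)
    (hweak : ∀ h : ℝ → ℝ, Continuous h → (∃ C, ∀ s : ℝ, 0 ≤ s → |h s| ≤ C) →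
      ContinuousOn (fun t => ∫ s in Set.Ioi (0:ℝ), h s * f s t) (Set.Ioi 0) ∧
      Tendsto (fun t => ∫ s in Set.Ioi (0:ℝ), h s * f s t)
        (nhdsWithin 0 (Set.Ioi 0)) (nhds (h 0))) :
    ∀ u : X, ∀ TΦ : ℝ → X,
      (∀ t : ℝ, 0 < t → TΦ t = ∫ s in Set.Ioi (0:ℝ), f s t • T s u) →
      TΦ 0 = u →
      (∀ t : ℝ, 0 < t →
        Integrable (fun s => f s t • T s u) (volume.restrict (Set.Ioi 0))) ∧
      (∀ t : ℝ, 0 ≤ t → ‖TΦ t‖ ≤ M * ‖u‖) ∧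
      ContinuousOn TΦ (Set.Ici 0) := by
  intro u TΦ hTΦ hTΦ0
  obtain ⟨g, hg, hg_norm⟩ := exists_boundedContinuousFunction_eqOn_Ici (hTcont u)
    fun s hs => (T s).le_of_opNorm_le (hTbd s hs) u
  let μ (t : ℝ) : ProbabilityMeasure ℝ :=
    ⟨subordinationMeasure f t, isProbabilityMeasure_subordinationMeasure hf0 hf1 t⟩
  have hTΦ_eq : EqOn TΦ (fun t => ∫ s, g s ∂(μ t)) (Ici 0) := by
    intro t ht
    rcases (mem_Ici.1 ht).eq_or_lt with rfl | ht
    · change TΦ 0 = ∫ s, g s ∂subordinationMeasure f 0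
      rw [integral_subordinationMeasure_of_nonpos le_rfl, hg self_mem_Ici, hTΦ0]
      simp [hT0]
    · change TΦ t = ∫ s, g s ∂subordinationMeasure f t
      rw [hTΦ t ht, integral_subordinationMeasure_of_pos hfmeas hf0 ht]
      exact setIntegral_congr_fun measurableSet_Ioi fun s hs =>
        congrArg (f s t • ·) (hg (Ioi_subset_Ici_self hs)).symm
  refine ⟨fun t ht => ?_, fun t ht => ?_, fun t ht => ?_⟩
  · have hg_int : Integrable g (μ t) :=
      .of_bound g.continuous.aestronglyMeasurable _ (ae_of_all _ hg_norm)
    exact ((integrable_subordinationMeasure_iff hfmeas hf0 ht).1 hg_int).congr_fun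
      (fun s hs => congrArg (f s t • ·) (hg (Ioi_subset_Ici_self hs))) measurableSet_Ioi
  · simpa [hTΦ_eq ht] using norm_integral_le_of_norm_le_const (μ := (μ t : Measure ℝ))
      (ae_of_all _ hg_norm)
  · have hweak' (h : ℝ →ᵇ ℝ) := hweak h h.continuous ⟨‖h‖, fun s _ => h.norm_coe_le_norm s⟩
    have hμ : ContinuousOn μ (Ici 0) := continuousOn_subordinationMeasure hfmeas hf0
      (fun _ => rfl) (fun h => (hweak' h).1) (fun h => (hweak' h).2)
    exact ((ProbabilityMeasure.continuousAt_integral_of_isTightMeasureSet g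
      isTightMeasureSet_singleton).comp_continuousWithinAt (hμ t ht)).congr hTΦ_eq (hTΦ_eq ht)

/-- **Uniform boundedness and strong continuity of the subordinated family.**
Let `(T(t))_{t ≥ 0}` be a uniformly bounded strongly continuous semigroup on a Banach
space `X` with `‖T(t)‖ ≤ M`, and let `f(·,t)` be a family of probability densities on
`(0,∞)` that varies weakly continuously in `t > 0` and converges weakly to `δ₀` as
`t → 0⁺`. Define `T_Φ(t)u = ∫₀^∞ T(s)u f(s,t) ds` (Bochner) for `t > 0` and
`T_Φ(0)u = u`. Then for every `u` the Bochner integral exists, `‖T_Φ(t)u‖ ≤ M‖u‖`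
for all `t ≥ 0`, and `t ↦ T_Φ(t)u` is continuous on `[0,∞)`. -/
theorem stmt5
    {X : Type*} [NormedAddCommGroup X] [NormedSpace ℝ X] [CompleteSpace X]
    (T : ℝ → X →L[ℝ] X) (M : ℝ)
    (hT0 : T 0 = ContinuousLinearMap.id ℝ X)
    (hTsemi : ∀ s t : ℝ, 0 ≤ s → 0 ≤ t → T (s + t) = (T s).comp (T t))
    (hTbd : ∀ t : ℝ, 0 ≤ t → ‖T t‖ ≤ M)
    (hTcont : ∀ u : X, ContinuousOn (fun t => T t u) (Set.Ici 0))
    (f : ℝ → ℝ → ℝ)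
    (hfmeas : Measurable fun q : ℝ × ℝ => f q.1 q.2)
    (hf0 : ∀ s t : ℝ, 0 ≤ f s t)
    (hf1 : ∀ t : ℝ, 0 < t → ∫ s in Set.Ioi (0:ℝ), f s t = 1)
    (hweak : ∀ h : ℝ → ℝ, Continuous h → (∃ C, ∀ s : ℝ, 0 ≤ s → |h s| ≤ C) →
      ContinuousOn (fun t => ∫ s in Set.Ioi (0:ℝ), h s * f s t) (Set.Ioi 0) ∧
      Tendsto (fun t => ∫ s in Set.Ioi (0:ℝ), h s * f s t)
        (nhdsWithin 0 (Set.Ioi 0)) (nhds (h 0))) :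
    ∀ u : X, ∀ TΦ : ℝ → X,
      (∀ t : ℝ, 0 < t → TΦ t = ∫ s in Set.Ioi (0:ℝ), f s t • T s u) →
      TΦ 0 = u →
      (∀ t : ℝ, 0 < t →
        Integrable (fun s => f s t • T s u) (volume.restrict (Set.Ioi 0))) ∧
      (∀ t : ℝ, 0 ≤ t → ‖TΦ t‖ ≤ M * ‖u‖) ∧
      ContinuousOn TΦ (Set.Ici 0) :=
  stmt5_general T M hT0 hTbd hTcont f hfmeas hf0 hf1 hweak
end

section
/- Let X be a Banach space and (T(t))_{t≥0} a uniformly bounded strongly continuous semigroup on X with sup_{t≥0} ‖T(t)‖ ≤ M. Let Φ : (0,∞) → (0,∞) and let f : (0,∞) × (0,∞) → [0,∞) be jointly measurable such that for each t > 0 the function s ↦ f(s,t) is a probability density on (0,∞) and for every s > 0 and λ > 0, ∫₀^∞ e^{−λt} f(s,t) dt = (Φ(λ)/λ) e^{−sΦ(λ)}. Define T_Φ(t)u = ∫₀^∞ T(s)u f(s,t) ds. Then for every u ∈ X and every λ > 0 both Bochner integrals below exist and ∫₀^∞ e^{−λt} T_Φ(t)u dt = (Φ(λ)/λ) ∫₀^∞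 e^{−τΦ(λ)} T(τ)u dτ. -/
/-!
Fubini. Since each `f(·, t)` is a probability density and `‖T(s)‖ ≤ M`, the function
`(t, s) ↦ e^{-λt} f(s,t) T(s)u` is dominated by `M‖u‖ e^{-λt} f(s,t)`, whose double integral is
`M‖u‖/λ`. Its two marginals are the two integrands of the theorem (the second one via the
Laplace condition), so both are integrable, and swapping the order of integration gives the
identity.
-/

open MeasureTheory Set

namespace MeasureTheory

variable {α β X : Type*} [MeasurableSpace α] [MeasurableSpace β] {μ : Measure α} {ν : Measure β}
  [SFinite ν] [NormedAddCommGroup X] [NormedSpace ℝ X]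
  {w : α → ℝ} {k : α → β → ℝ} {g : β → X} {C : ℝ}

theorem integrable_abs_mul_density
    (hw : Integrable w μ) (hk : AEStronglyMeasurable (fun q : α × β => k q.1 q.2) (μ.prod ν))
    (hk0 : ∀ t s, 0 ≤ k t s) (hk1 : ∀ᵐ t ∂μ, ∫ s, k t s ∂ν = 1) :
    Integrable (fun q : α × β => |w q.1| * k q.1 q.2) (μ.prod ν) := by
  have hk_int : ∀ᵐ t ∂μ, Integrable (k t) ν := by
    filter_upwards [hk1] with t ht
    by_contra h
    simp [integral_undef h] at ht
  rw [integrable_prod_iff (f := fun q : α × β => |w q.1| * k q.1 q.2)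
    (hw.abs.aestronglyMeasurable.comp_fst.mul hk)]
  refine ⟨?_, hw.abs.congr ?_⟩
  · filter_upwards [hk_int] with t ht using ht.const_mul _
  · filter_upwards [hk1] with t ht
    simp_rw [Real.norm_eq_abs, abs_mul, abs_abs, abs_of_nonneg (hk0 t _), integral_const_mul, ht,
      mul_one]

theorem integrable_mul_density_smul
    (hw : Integrable w μ) (hk : AEStronglyMeasurable (fun q : α × β => k q.1 q.2) (μ.prod ν))
    (hk0 : ∀ t s, 0 ≤ k t s) (hk1 : ∀ᵐ t ∂μ, ∫ s, k t s ∂ν = 1)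
    (hg : AEStronglyMeasurable g ν) (hgC : ∀ᵐ s ∂ν, ‖g s‖ ≤ C) :
    Integrable (fun q : α × β => (w q.1 * k q.1 q.2) • g q.2) (μ.prod ν) := by
  refine ((integrable_abs_mul_density hw hk hk0 hk1).const_mul C).mono'
    ((hw.aestronglyMeasurable.comp_fst.mul hk).smul hg.comp_snd) ?_
  filter_upwards [Measure.quasiMeasurePreserving_snd.ae hgC] with q hq
  rw [norm_smul, Real.norm_eq_abs, abs_mul, abs_of_nonneg (hk0 _ _), mul_comm C]
  exact mul_le_mul_of_nonneg_left hq (mul_nonneg (abs_nonneg _) (hk0 _ _))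

theorem integrable_smul_integral_density_smul
    (hw : Integrable w μ) (hk : AEStronglyMeasurable (fun q : α × β => k q.1 q.2) (μ.prod ν))
    (hk0 : ∀ t s, 0 ≤ k t s) (hk1 : ∀ᵐ t ∂μ, ∫ s, k t s ∂ν = 1)
    (hg : AEStronglyMeasurable g ν) (hgC : ∀ᵐ s ∂ν, ‖g s‖ ≤ C) :
    Integrable (fun t => w t • ∫ s, k t s • g s ∂ν) μ := by
  refine (integrable_mul_density_smul hw hk hk0 hk1 hg hgC).integral_prod_left.congr ?_
  filter_upwards with t
  simp_rw [← integral_smul, smul_smul]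

variable [CompleteSpace X] [SFinite μ]

theorem integral_smul_integral_density_smul
    (hw : Integrable w μ) (hk : AEStronglyMeasurable (fun q : α × β => k q.1 q.2) (μ.prod ν))
    (hk0 : ∀ t s, 0 ≤ k t s) (hk1 : ∀ᵐ t ∂μ, ∫ s, k t s ∂ν = 1)
    (hg : AEStronglyMeasurable g ν) (hgC : ∀ᵐ s ∂ν, ‖g s‖ ≤ C) :
    ∫ t, w t • ∫ s, k t s • g s ∂ν ∂μ = ∫ s, (∫ t, w t * k t s ∂μ) • g s ∂ν := by
  have hint := integrable_mul_density_smul hw hk hk0 hk1 hg hgC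
  calc ∫ t, w t • ∫ s, k t s • g s ∂ν ∂μ = ∫ t, ∫ s, (w t * k t s) • g s ∂ν ∂μ := by
        simp_rw [← integral_smul, smul_smul]
    _ = ∫ s, ∫ t, (w t * k t s) • g s ∂μ ∂ν := integral_integral_swap hint
    _ = ∫ s, (∫ t, w t * k t s ∂μ) • g s ∂ν := by simp_rw [integral_smul_const]

theorem integrable_integral_mul_density_smul
    (hw : Integrable w μ) (hk : AEStronglyMeasurable (fun q : α × β => k q.1 q.2) (μ.prod ν))
    (hk0 : ∀ t s, 0 ≤ k t s) (hk1 : ∀ᵐ t ∂μ, ∫ s, k t s ∂ν = 1)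
    (hg : AEStronglyMeasurable g ν) (hgC : ∀ᵐ s ∂ν, ‖g s‖ ≤ C) :
    Integrable (fun s => (∫ t, w t * k t s ∂μ) • g s) ν := by
  refine (integrable_mul_density_smul hw hk hk0 hk1 hg hgC).integral_prod_right.congr ?_
  filter_upwards with s
  exact integral_smul_const _ _

end MeasureTheory

theorem stmt6_general
    {X : Type*} [NormedAddCommGroup X] [NormedSpace ℝ X] [CompleteSpace X]
    (T : ℝ → X →L[ℝ] X) (M : ℝ)
    (hTbd : ∀ t : ℝ, 0 ≤ t → ‖T t‖ ≤ M)
    (hTcont : ∀ u : X, ContinuousOn (fun t => T t u) (Set.Ici 0))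
    (Φ : ℝ → ℝ) (hΦpos : ∀ z : ℝ, 0 < z → 0 < Φ z)
    (f : ℝ → ℝ → ℝ)
    (hfmeas : Measurable fun q : ℝ × ℝ => f q.1 q.2)
    (hf0 : ∀ s t : ℝ, 0 ≤ f s t)
    (hf1 : ∀ t : ℝ, 0 < t → ∫ s in Set.Ioi (0:ℝ), f s t = 1)
    (hlap : ∀ s : ℝ, 0 < s → ∀ lam : ℝ, 0 < lam →
      ∫ t in Set.Ioi (0:ℝ), Real.exp (-lam * t) * f s t
        = Φ lam / lam * Real.exp (-s * Φ lam)) :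
    ∀ u : X, ∀ lam : ℝ, 0 < lam →
      Integrable
        (fun t => Real.exp (-lam * t) • ∫ s in Set.Ioi (0:ℝ), f s t • T s u)
        (volume.restrict (Set.Ioi 0)) ∧
      Integrable (fun τ => Real.exp (-τ * Φ lam) • T τ u)
        (volume.restrict (Set.Ioi 0)) ∧
      ∫ t in Set.Ioi (0:ℝ),
          Real.exp (-lam * t) • ∫ s in Set.Ioi (0:ℝ), f s t • T s u
        = (Φ lam / lam) • ∫ τ in Set.Ioi (0:ℝ), Real.exp (-τ * Φ lam) • T τ u := by
  intro u lam hlam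
  have hw : IntegrableOn (fun t => Real.exp (-lam * t)) (Ioi 0) := exp_neg_integrableOn_Ioi 0 hlam
  have hk : AEStronglyMeasurable (fun q : ℝ × ℝ => f q.2 q.1)
      ((volume.restrict (Ioi 0)).prod (volume.restrict (Ioi 0))) :=
    (hfmeas.comp measurable_swap).aestronglyMeasurable
  have hk1 : ∀ᵐ t ∂volume.restrict (Ioi (0:ℝ)), ∫ s in Ioi 0, f s t = 1 :=
    (ae_restrict_mem measurableSet_Ioi).mono hf1
  have hg : AEStronglyMeasurable (fun s => T s u) (volume.restrict (Ioi 0)) :=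
    ((hTcont u).mono Ioi_subset_Ici_self).aestronglyMeasurable measurableSet_Ioi
  have hgC : ∀ᵐ s ∂volume.restrict (Ioi (0:ℝ)), ‖T s u‖ ≤ M * ‖u‖ :=
    (ae_restrict_mem measurableSet_Ioi).mono fun s hs =>
      (T s).le_of_opNorm_le (hTbd s hs.le) u
  have hlap_ae : ∀ᵐ s ∂volume.restrict (Ioi (0:ℝ)),
      (∫ t in Ioi 0, Real.exp (-lam * t) * f s t) • T s u
        = (Φ lam / lam) • (Real.exp (-s * Φ lam) • T s u) :=
    (ae_restrict_mem measurableSet_Ioi).mono fun s hs => by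
      rw [hlap s hs lam hlam, smul_smul]
  have hk0 : ∀ t s, 0 ≤ f s t := fun t s => hf0 s t
  have hΦlam : Φ lam / lam ≠ 0 := (div_pos (hΦpos lam hlam) hlam).ne'
  refine ⟨integrable_smul_integral_density_smul hw hk hk0 hk1 hg hgC,
    (integrable_fun_smul_iff hΦlam _).mp
      ((integrable_integral_mul_density_smul hw hk hk0 hk1 hg hgC).congr hlap_ae),
    ?_⟩
  rw [integral_smul_integral_density_smul hw hk hk0 hk1 hg hgC,
    integral_congr_ae hlap_ae, integral_smul]

/-- **Laplace transform of the subordinated family.**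
Let `(T(t))_{t ≥ 0}` be a uniformly bounded strongly continuous semigroup on a Banach
space `X` with `‖T(t)‖ ≤ M`, and let `f(·,t)` be probability densities on `(0,∞)` with
`∫₀^∞ e^{−λt} f(s,t) dt = (Φ(λ)/λ) e^{−sΦ(λ)}` for all `s, λ > 0`. Then for every
`u ∈ X` and `λ > 0` both Bochner integrals below exist and
`∫₀^∞ e^{−λt} T_Φ(t)u dt = (Φ(λ)/λ) ∫₀^∞ e^{−τΦ(λ)} T(τ)u dτ`, where
`T_Φ(t)u = ∫₀^∞ T(s)u f(s,t) ds`. -/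
theorem stmt6
    {X : Type*} [NormedAddCommGroup X] [NormedSpace ℝ X] [CompleteSpace X]
    (T : ℝ → X →L[ℝ] X) (M : ℝ)
    (hT0 : T 0 = ContinuousLinearMap.id ℝ X)
    (hTsemi : ∀ s t : ℝ, 0 ≤ s → 0 ≤ t → T (s + t) = (T s).comp (T t))
    (hTbd : ∀ t : ℝ, 0 ≤ t → ‖T t‖ ≤ M)
    (hTcont : ∀ u : X, ContinuousOn (fun t => T t u) (Set.Ici 0))
    (Φ : ℝ → ℝ) (hΦpos : ∀ z : ℝ, 0 < z → 0 < Φ z)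
    (f : ℝ → ℝ → ℝ)
    (hfmeas : Measurable fun q : ℝ × ℝ => f q.1 q.2)
    (hf0 : ∀ s t : ℝ, 0 ≤ f s t)
    (hf1 : ∀ t : ℝ, 0 < t → ∫ s in Set.Ioi (0:ℝ), f s t = 1)
    (hlap : ∀ s : ℝ, 0 < s → ∀ lam : ℝ, 0 < lam →
      ∫ t in Set.Ioi (0:ℝ), Real.exp (-lam * t) * f s t
        = Φ lam / lam * Real.exp (-s * Φ lam)) :
    ∀ u : X, ∀ lam : ℝ, 0 < lam →
      Integrable
        (fun t => Real.exp (-lam * t) • ∫ s in Set.Ioi (0:ℝ), f s t • T s u)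
        (volume.restrict (Set.Ioi 0)) ∧
      Integrable (fun τ => Real.exp (-τ * Φ lam) • T τ u)
        (volume.restrict (Set.Ioi 0)) ∧
      ∫ t in Set.Ioi (0:ℝ),
          Real.exp (-lam * t) • ∫ s in Set.Ioi (0:ℝ), f s t • T s u
        = (Φ lam / lam) • ∫ τ in Set.Ioi (0:ℝ), Real.exp (-τ * Φ lam) • T τ u :=
  stmt6_general T M hTbd hTcont Φ hΦpos f hfmeas hf0 hf1 hlap
end

section
/- Let Φ : (0,∞) → (0,∞) satisfy lim_{z→0⁺} Φ(z)/z = l ∈ (0,∞). Fix λ > 0 and let g : (0,∞) → [0,∞) be measurable with ∫₀^∞ e^{−zt} g(t) dt = Φ(z)/(z(λ + Φ(z))) for all z > 0. Then g is integrable on (0,∞), and ∫₀^∞ g(t) dt = l/λ. -/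
open MeasureTheory Set Filter Topology

/-! As `z ↓ 0` the integrands `e^{-zt} g(t)` increase to `g`, so by monotone convergence the
Laplace transform of `g` at `z` tends to `∫₀^∞ g`, and `g` is integrable as soon as that limit is
finite. The prescribed transform `Φ(z)/(z(λ + Φ(z))) = (Φ(z)/z)/(λ + Φ(z))` tends to `l/λ`,
because `Φ(z) = (Φ(z)/z)·z → 0`. -/

theorem integrable_and_integral_eq_of_tendsto_of_monotone {α : Type*} [MeasurableSpace α]
    {μ : Measure α} {f : ℕ → α → ℝ} {F : α → ℝ} {c : ℝ}
    (hf : ∀ n, Integrable (f n) μ) (hf0 : ∀ n, 0 ≤ᵐ[μ] f n) (hF : AEStronglyMeasurable F μ)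
    (h_mono : ∀ᵐ x ∂μ, Monotone fun n ↦ f n x)
    (h_tendsto : ∀ᵐ x ∂μ, Tendsto (fun n ↦ f n x) atTop (𝓝 (F x)))
    (hc : Tendsto (fun n ↦ ∫ x, f n x ∂μ) atTop (𝓝 c)) :
    Integrable F μ ∧ ∫ x, F x ∂μ = c := by
  have hF0 : 0 ≤ᵐ[μ] F := by
    filter_upwards [ae_all_iff.2 hf0, h_tendsto] with x hx0 hx
    exact ge_of_tendsto' hx hx0
  have hc0 : 0 ≤ c := ge_of_tendsto' hc fun n ↦ integral_nonneg_of_ae (hf0 n)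
  have hlint : ∫⁻ x, ENNReal.ofReal (F x) ∂μ = ENNReal.ofReal c := by
    refine tendsto_nhds_unique (lintegral_tendsto_of_tendsto_of_monotone
      (fun n ↦ (hf n).aemeasurable.ennreal_ofReal) ?_ ?_) ?_
    · filter_upwards [h_mono] with x hx m n hmn using ENNReal.ofReal_le_ofReal (hx hmn)
    · filter_upwards [h_tendsto] with x hx using (ENNReal.continuous_ofReal.tendsto _).comp hx
    · simp_rw [← ofReal_integral_eq_lintegral_ofReal (hf _) (hf0 _)]
      exact (ENNReal.continuous_ofReal.tendsto _).comp hc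
  refine ⟨⟨hF, (hasFiniteIntegral_iff_ofReal hF0).2 (hlint ▸ ENNReal.ofReal_lt_top)⟩, ?_⟩
  rw [integral_eq_lintegral_of_nonneg_ae hF0 hF, hlint, ENNReal.toReal_ofReal hc0]

theorem tendsto_div_mul_const_add_nhdsGT_zero {Φ : ℝ → ℝ} {l : ℝ}
    (hΦ : Tendsto (fun z ↦ Φ z / z) (𝓝[>] 0) (𝓝 l)) {a : ℝ} (ha : a ≠ 0) :
    Tendsto (fun z ↦ Φ z / (z * (a + Φ z))) (𝓝[>] 0) (𝓝 (l / a)) := by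
  have hΦ0 : Tendsto Φ (𝓝[>] 0) (𝓝 0) := by
    have := hΦ.mul (tendsto_nhdsWithin_of_tendsto_nhds (tendsto_id (x := 𝓝 (0 : ℝ))))
    rw [mul_zero] at this
    refine this.congr' ?_
    filter_upwards [self_mem_nhdsWithin] with z hz using div_mul_cancel₀ _ (ne_of_gt hz)
  simpa only [div_mul_eq_div_div, add_zero, Pi.div_def] using
    hΦ.div (tendsto_const_nhds.add hΦ0) (by simpa)

theorem integrableOn_Ioi_and_integral_eq_of_tendsto_laplace {g : ℝ → ℝ} {c : ℝ}
    (hg : AEStronglyMeasurable g (volume.restrict (Ioi 0)))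
    (hg0 : 0 ≤ᵐ[volume.restrict (Ioi 0)] g)
    (hint : ∀ z, 0 < z → IntegrableOn (fun t ↦ Real.exp (-z * t) * g t) (Ioi 0))
    (hc : Tendsto (fun z ↦ ∫ t in Ioi 0, Real.exp (-z * t) * g t) (𝓝[>] 0) (𝓝 c)) :
    IntegrableOn g (Ioi 0) ∧ ∫ t in Ioi 0, g t = c := by
  set z : ℕ → ℝ := fun n ↦ 1 / (n + 1)
  have hz_pos n : 0 < z n := Nat.one_div_pos_of_nat
  have hz : Tendsto z atTop (𝓝[>] 0) :=
    tendsto_nhdsWithin_of_tendsto_nhds_of_eventually_within _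
      tendsto_one_div_add_atTop_nhds_zero_nat (.of_forall hz_pos)
  refine integrable_and_integral_eq_of_tendsto_of_monotone (fun n ↦ hint _ (hz_pos n)) ?_ hg
    ?_ ?_ (hc.comp hz)
  · intro n
    filter_upwards [hg0] with t ht using mul_nonneg (Real.exp_nonneg _) ht
  · filter_upwards [hg0, ae_restrict_mem measurableSet_Ioi] with t ht ht_pos m n hmn
    show Real.exp (-z m * t) * g t ≤ Real.exp (-z n * t) * g t
    gcongr
    · exact le_of_lt ht_pos
    · exact Nat.one_div_le_one_div hmn
  · filter_upwards with t
    have := ((hz.mono_right nhdsWithin_le_nhds).neg.mul_const t).rexp.mul_const (g t)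
    simpa using this

theorem stmt8_general (Φ : ℝ → ℝ) (l : ℝ)
    (hΦpos : ∀ z : ℝ, 0 < z → 0 < Φ z)
    (hΦlim : Tendsto (fun z => Φ z / z) (nhdsWithin 0 (Set.Ioi 0)) (nhds l))
    (lam : ℝ) (hlam : 0 < lam)
    (g : ℝ → ℝ) (hgmeas : Measurable g) (hg0 : ∀ t : ℝ, 0 < t → 0 ≤ g t)
    (hglap : ∀ z : ℝ, 0 < z →
      ∫ t in Set.Ioi (0:ℝ), Real.exp (-z * t) * g t = Φ z / (z * (lam + Φ z))) :
    IntegrableOn g (Set.Ioi 0) ∧ ∫ t in Set.Ioi (0:ℝ), g t = l / lam := by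
  have hint (z : ℝ) (hz : 0 < z) : IntegrableOn (fun t ↦ Real.exp (-z * t) * g t) (Ioi 0) := by
    have hΦz := hΦpos z hz
    -- a non-integrable integrand would have Bochner integral `0`, not the positive transform
    refine .of_integral_ne_zero ?_
    rw [hglap z hz]
    positivity
  refine integrableOn_Ioi_and_integral_eq_of_tendsto_laplace hgmeas.aestronglyMeasurable ?_ hint ?_
  · filter_upwards [ae_restrict_mem measurableSet_Ioi] with t ht using hg0 t ht
  · refine (tendsto_div_mul_const_add_nhdsGT_zero hΦlim hlam.ne').congr' ?_
    filter_upwards [self_mem_nhdsWithin] with z hz using (hglap z hz).symm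

/-- **Integrability of the relaxation function (short-range dependence).**
Let `Φ : (0,∞) → (0,∞)` satisfy `lim_{z→0⁺} Φ(z)/z = l ∈ (0,∞)`. Fix `λ > 0` and let
`g : (0,∞) → [0,∞)` be measurable with Laplace transform
`∫₀^∞ e^{−zt} g(t) dt = Φ(z)/(z(λ + Φ(z)))` for all `z > 0`. Then `g` is integrable
on `(0,∞)` and `∫₀^∞ g(t) dt = l/λ`. -/
theorem stmt8 (Φ : ℝ → ℝ) (l : ℝ) (hl : 0 < l)
    (hΦpos : ∀ z : ℝ, 0 < z → 0 < Φ z)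
    (hΦlim : Tendsto (fun z => Φ z / z) (nhdsWithin 0 (Set.Ioi 0)) (nhds l))
    (lam : ℝ) (hlam : 0 < lam)
    (g : ℝ → ℝ) (hgmeas : Measurable g) (hg0 : ∀ t : ℝ, 0 < t → 0 ≤ g t)
    (hglap : ∀ z : ℝ, 0 < z →
      ∫ t in Set.Ioi (0:ℝ), Real.exp (-z * t) * g t = Φ z / (z * (lam + Φ z))) :
    IntegrableOn g (Set.Ioi 0) ∧ ∫ t in Set.Ioi (0:ℝ), g t = l / lam :=
  stmt8_general Φ l hΦpos hΦlim lam hlam g hgmeas hg0 hglap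
end

section
/- Fix θ > 0 and let p(s,x,y) = (2π(1−e^{−2θs}))^{−1/2} exp(−(x − y e^{−θs})²/(2(1−e^{−2θs}))) be the Ornstein–Uhlenbeck (Mehler) transition kernel and m(x) = (2π)^{−1/2} e^{−x²/2} the standard Gaussian density. For each t > 0 let f_t be a probability density on (0,∞) and set 𝔢(t,λ) = ∫₀^∞ e^{−λs} f_t(s) ds. Assume: (i) for each λ > 0, 𝔢(t,λ) → 0 as t → +∞; (ii) for each λ ≥ 0 the map t ↦ 𝔢(t,λ) is nonincreasing; (iii) there exists t₀ > 0 with sup_{λ≥0} λ·𝔢(t₀,λ) < ∞. Then for every x, y ∈ ℝ, lim_{t→+∞} ∫₀^∞ p(s,x,y) f_t(s) ds = m(x). -/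
open MeasureTheory Set Filter

/-- The Ornstein–Uhlenbeck (Mehler) transition kernel
`p(s,x,y) = (2π(1−e^{−2θs}))^{−1/2} exp(−(x − y e^{−θs})²/(2(1−e^{−2θs})))`. -/
noncomputable def ouKernel (θ s x y : ℝ) : ℝ :=
  (Real.sqrt (2 * Real.pi * (1 - Real.exp (-2 * θ * s))))⁻¹ *
    Real.exp (-(x - y * Real.exp (-θ * s)) ^ 2 / (2 * (1 - Real.exp (-2 * θ * s))))

/-- The standard Gaussian density `m(x) = (2π)^{−1/2} e^{−x²/2}`. -/
noncomputable def gauss (x : ℝ) : ℝ :=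
  (Real.sqrt (2 * Real.pi))⁻¹ * Real.exp (-x ^ 2 / 2)

/-!
Write `∫ p(s,x,y) f_t(s) ds - m(x) = ∫ (p(s,x,y) - m(x)) f_t(s) ds` and split it at a small `δ`.
For `s ≥ δ` the kernel is a smooth function of `u = e^{-θs}` on a compact interval around
`u = 0`, where it equals `m(x)`; hence `|p - m| ≤ L e^{-θs}` and this part is at most
`L 𝔢(t,θ) → 0` by (i). For `s ≤ δ ≤ 1` only `|p - m| ≤ K s^{-1/2}` is available. By (ii) and
(iii), `𝔢(t,λ) ≤ C/λ` for `t ≥ t₀`, so `f_t` gives mass at most `e C u` to `(0,u]`; summing over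
the pieces `(δ/4^{n+1}, δ/4^n]` bounds `∫_0^δ s^{-1/2} f_t(s) ds` by `4 e C √δ`, uniformly in `t`.
-/

open Real Topology

noncomputable def mehlerProfile (x y u : ℝ) : ℝ :=
  (√(2 * π * (1 - u ^ 2)))⁻¹ * exp (-(x - y * u) ^ 2 / (2 * (1 - u ^ 2)))

lemma ouKernel_eq_mehlerProfile (θ s x y : ℝ) :
    ouKernel θ s x y = mehlerProfile x y (exp (-θ * s)) := by
  have h : exp (-θ * s) ^ 2 = exp (-2 * θ * s) := by rw [← exp_nat_mul]; ring_nf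
  rw [mehlerProfile, h, ouKernel]

lemma mehlerProfile_zero (x y : ℝ) : mehlerProfile x y 0 = gauss x := by
  simp [mehlerProfile, gauss]

lemma contDiffOn_mehlerProfile (x y : ℝ) {n : WithTop ℕ∞} :
    ContDiffOn ℝ n (mehlerProfile x y) (Ioo (-1) 1) := by
  intro u hu
  have hu2 : 0 < 1 - u ^ 2 := by nlinarith [hu.1, hu.2]
  refine ContDiffAt.contDiffWithinAt ?_
  have hπu : 0 < 2 * π * (1 - u ^ 2) := mul_pos (by positivity) hu2
  have hsqrt : ContDiffAt ℝ n (fun u => √(2 * π * (1 - u ^ 2))) u :=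
    (contDiffAt_sqrt hπu.ne').comp u (by fun_prop)
  refine (hsqrt.inv (sqrt_pos.2 hπu).ne').mul ?_
  exact contDiff_exp.contDiffAt.comp u
    ((by fun_prop : ContDiffAt ℝ n (fun u => -(x - y * u) ^ 2) u).div (by fun_prop)
      (mul_pos two_pos hu2).ne')

lemma exists_abs_ouKernel_sub_gauss_le {θ δ : ℝ} (hθ : 0 < θ) (hδ : 0 < δ) (x y : ℝ) :
    ∃ L, 0 ≤ L ∧ ∀ s, δ ≤ s → |ouKernel θ s x y - gauss x| ≤ L * exp (-θ * s) := by
  have hr : exp (-θ * δ) < 1 := exp_lt_one_iff.2 (by nlinarith)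
  have hsub : Icc 0 (exp (-θ * δ)) ⊆ Ioo (-1) 1 := fun u hu =>
    ⟨by linarith [hu.1], hu.2.trans_lt hr⟩
  obtain ⟨L, hL⟩ := ((contDiffOn_mehlerProfile x y).mono hsub).exists_lipschitzOnWith
    one_ne_zero (convex_Icc _ _) isCompact_Icc
  refine ⟨L, L.2, fun s hs => ?_⟩
  have hu : exp (-θ * s) ∈ Icc 0 (exp (-θ * δ)) :=
    ⟨(exp_pos _).le, exp_le_exp.2 (by nlinarith)⟩
  have := hL.dist_le_mul _ hu 0 ⟨le_rfl, (exp_pos _).le⟩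
  rwa [dist_zero_right, norm_of_nonneg (exp_pos _).le, mehlerProfile_zero,
    ← ouKernel_eq_mehlerProfile, Real.dist_eq] at this

lemma mul_one_sub_exp_neg_le {a s : ℝ} (hs0 : 0 ≤ s) (hs1 : s ≤ 1) :
    s * (1 - exp (-a)) ≤ 1 - exp (-a * s) := by
  have h := convexOn_exp.2 (mem_univ (-a)) (mem_univ 0) hs0 (sub_nonneg.2 hs1) (by ring)
  simp only [smul_eq_mul, mul_zero, add_zero, exp_zero, mul_one] at h
  rw [mul_comm (-a)]
  linarith

lemma ouKernel_le_mul_inv_sqrt {θ s : ℝ} (hθ : 0 < θ) (hs : s ∈ Ioc 0 1) (x y : ℝ) :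
    ouKernel θ s x y ≤ (√(2 * π * (1 - exp (-2 * θ))))⁻¹ * (√s)⁻¹ := by
  have hθ' : 0 < 1 - exp (-2 * θ) := sub_pos.2 (exp_lt_one_iff.2 (by linarith))
  have hvar : 2 * π * (1 - exp (-2 * θ)) * s ≤ 2 * π * (1 - exp (-2 * θ * s)) := by
    have := mul_one_sub_exp_neg_le (a := 2 * θ) hs.1.le hs.2
    rw [neg_mul_eq_neg_mul] at this
    nlinarith [pi_pos]
  calc ouKernel θ s x y ≤ (√(2 * π * (1 - exp (-2 * θ * s))))⁻¹ * 1 := by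
        refine mul_le_mul_of_nonneg_left (exp_le_one_iff.2 ?_) (by positivity)
        exact div_nonpos_of_nonpos_of_nonneg (neg_nonpos.2 (sq_nonneg _))
          (by nlinarith [exp_lt_one_iff.2 (by nlinarith [hs.1] : -2 * θ * s < 0)])
    _ ≤ (√(2 * π * (1 - exp (-2 * θ)) * s))⁻¹ := by
        rw [mul_one]
        exact inv_anti₀ (sqrt_pos.2 (by have := hs.1; positivity)) (sqrt_le_sqrt hvar)
    _ = (√(2 * π * (1 - exp (-2 * θ))))⁻¹ * (√s)⁻¹ := by
        rw [sqrt_mul (by positivity), mul_inv]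

lemma exists_abs_ouKernel_sub_gauss_le_mul_inv_sqrt {θ : ℝ} (hθ : 0 < θ) (x y : ℝ) :
    ∃ K, 0 ≤ K ∧ ∀ s ∈ Ioc (0 : ℝ) 1, |ouKernel θ s x y - gauss x| ≤ K * (√s)⁻¹ := by
  refine ⟨(√(2 * π * (1 - exp (-2 * θ))))⁻¹ + gauss x, by unfold gauss; positivity, fun s hs => ?_⟩
  have hp := ouKernel_le_mul_inv_sqrt hθ hs x y
  have hp0 : 0 ≤ ouKernel θ s x y := by unfold ouKernel; positivity
  have hm0 : 0 ≤ gauss x := by unfold gauss; positivity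
  have hs1 : 1 ≤ (√s)⁻¹ := one_le_inv₀ (sqrt_pos.2 hs.1) |>.2 (sqrt_le_one.2 hs.2)
  rw [abs_le]
  constructor <;> nlinarith

lemma iUnion_Ioc_mul_pow_succ {δ q : ℝ} (hδ : 0 < δ) (hq0 : 0 < q) (hq1 : q < 1) :
    ⋃ n : ℕ, Ioc (δ * q ^ (n + 1)) (δ * q ^ n) = Ioc 0 δ := by
  ext s
  simp only [mem_iUnion, mem_Ioc]
  constructor
  · rintro ⟨n, hlo, hhi⟩
    exact ⟨(by positivity : 0 < δ * q ^ (n + 1)).trans hlo,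
      hhi.trans (mul_le_of_le_one_right hδ.le (pow_le_one₀ hq0.le hq1.le))⟩
  · rintro ⟨hs0, hsδ⟩
    obtain ⟨n, hlo, hhi⟩ := exists_nat_pow_near_of_lt_one (div_pos hs0 hδ)
      ((div_le_one hδ).2 hsδ) hq0 hq1
    exact ⟨n, by rwa [lt_div_iff₀' hδ] at hlo, by rwa [div_le_iff₀' hδ] at hhi⟩

section

variable {g : ℝ → ℝ}

lemma integrableOn_exp_neg_mul (hgi : IntegrableOn g (Ioi 0)) {lam : ℝ} (hlam : 0 ≤ lam) :
    IntegrableOn (fun s => exp (-lam * s) * g s) (Ioi 0) := by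
  refine hgi.bdd_mul (c := 1)
    (by fun_prop : Continuous fun s => exp (-lam * s)).aestronglyMeasurable ?_
  filter_upwards [ae_restrict_mem measurableSet_Ioi] with s hs
  rw [norm_of_nonneg (exp_pos _).le, exp_le_one_iff]
  nlinarith [mem_Ioi.1 hs]

lemma setIntegral_Ioc_le_of_laplace_le (hg0 : ∀ s, 0 ≤ g s) (hgi : IntegrableOn g (Ioi 0))
    {C : ℝ} (hlap : ∀ lam, 0 < lam → ∫ s in Ioi 0, exp (-lam * s) * g s ≤ C / lam)
    {u : ℝ} (hu : 0 < u) :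
    ∫ s in Ioc 0 u, g s ≤ exp 1 * C * u := by
  have hexp := integrableOn_exp_neg_mul hgi (inv_pos.2 hu).le
  calc ∫ s in Ioc 0 u, g s ≤ ∫ s in Ioc 0 u, exp 1 * (exp (-u⁻¹ * s) * g s) := by
        refine setIntegral_mono_on (hgi.mono_set Ioc_subset_Ioi_self)
          ((hexp.mono_set Ioc_subset_Ioi_self).const_mul _) measurableSet_Ioc fun s hs => ?_
        have : 1 ≤ exp 1 * exp (-u⁻¹ * s) := by
          rw [← exp_add, one_le_exp_iff, neg_mul, ← sub_eq_add_neg, sub_nonneg,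
            inv_mul_le_one₀ hu]
          exact hs.2
        nlinarith [hg0 s]
    _ = exp 1 * ∫ s in Ioc 0 u, exp (-u⁻¹ * s) * g s := integral_const_mul _ _
    _ ≤ exp 1 * ∫ s in Ioi 0, exp (-u⁻¹ * s) * g s := by
        refine mul_le_mul_of_nonneg_left (setIntegral_mono_set hexp ?_
          Ioc_subset_Ioi_self.eventuallyLE) (exp_pos _).le
        exact ae_of_all _ fun s => mul_nonneg (exp_pos _).le (hg0 s)
    _ ≤ exp 1 * (C / u⁻¹) := by gcongr; exact hlap _ (inv_pos.2 hu)
    _ = exp 1 * C * u := by rw [div_inv_eq_mul, mul_assoc]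

lemma integrableOn_inv_sqrt_mul_and_setIntegral_Ioc_le (hg0 : ∀ s, 0 ≤ g s) {a b M : ℝ}
    (ha : 0 < a) (hgi : IntegrableOn g (Ioc 0 b)) (hmass : ∫ s in Ioc 0 b, g s ≤ M) :
    IntegrableOn (fun s => (√s)⁻¹ * g s) (Ioc a b) ∧
      ∫ s in Ioc a b, (√s)⁻¹ * g s ≤ (√a)⁻¹ * M := by
  have hsub : Ioc a b ⊆ Ioc 0 b := Ioc_subset_Ioc_left ha.le
  have hgab := hgi.mono_set hsub
  have hbound : ∀ s ∈ Ioc a b, (√s)⁻¹ * g s ≤ (√a)⁻¹ * g s := fun s hs => by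
    gcongr
    exacts [hg0 s, hs.1.le]
  have hint : IntegrableOn (fun s => (√s)⁻¹ * g s) (Ioc a b) := by
    refine (hgab.const_mul (√a)⁻¹).mono'
      (continuous_sqrt.measurable.inv.aestronglyMeasurable.mul hgab.aestronglyMeasurable) ?_
    filter_upwards [ae_restrict_mem measurableSet_Ioc] with s hs
    rw [norm_of_nonneg (mul_nonneg (inv_nonneg.2 (sqrt_nonneg s)) (hg0 s))]
    exact hbound s hs
  refine ⟨hint, ?_⟩
  calc ∫ s in Ioc a b, (√s)⁻¹ * g s ≤ ∫ s in Ioc a b, (√a)⁻¹ * g s :=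
        setIntegral_mono_on hint (hgab.const_mul _) measurableSet_Ioc hbound
    _ = (√a)⁻¹ * ∫ s in Ioc a b, g s := integral_const_mul _ _
    _ ≤ (√a)⁻¹ * M := by
        refine mul_le_mul_of_nonneg_left ((setIntegral_mono_set hgi ?_ hsub.eventuallyLE).trans
          hmass) (by positivity)
        exact ae_of_all _ hg0

lemma integrableOn_inv_sqrt_mul_and_setIntegral_le (hg0 : ∀ s, 0 ≤ g s) {δ M : ℝ} (hδ : 0 < δ)
    (hgi : IntegrableOn g (Ioc 0 δ)) (hmass : ∀ u ∈ Ioc 0 δ, ∫ s in Ioc 0 u, g s ≤ M * u) :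
    IntegrableOn (fun s => (√s)⁻¹ * g s) (Ioc 0 δ) ∧
      ∫ s in Ioc 0 δ, (√s)⁻¹ * g s ≤ 4 * M * √δ := by
  set P : ℕ → Set ℝ := fun n => Ioc (δ * (1 / 4) ^ (n + 1)) (δ * (1 / 4) ^ n)
  have hU : ⋃ n, P n = Ioc 0 δ := iUnion_Ioc_mul_pow_succ hδ (by norm_num) (by norm_num)
  have hpiece : ∀ n, IntegrableOn (fun s => (√s)⁻¹ * g s) (P n) ∧
      ∫ s in P n, (√s)⁻¹ * g s ≤ 2 * M * √δ * (1 / 2) ^ n := fun n => by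
    have hδn : δ * (1 / 4) ^ n ≤ δ :=
      mul_le_of_le_one_right hδ.le (pow_le_one₀ (by norm_num) (by norm_num))
    refine (integrableOn_inv_sqrt_mul_and_setIntegral_Ioc_le hg0 (by positivity)
      (hgi.mono_set (Ioc_subset_Ioc_right hδn)) (hmass _ ⟨by positivity, hδn⟩)).imp_right
      (le_of_le_of_eq · ?_)
    have hδ' : √δ ≠ 0 := (sqrt_pos.2 hδ).ne'
    rw [show δ * (1 / 4) ^ (n + 1) = (√δ * (1 / 2) ^ (n + 1)) ^ 2 by
      rw [mul_pow, sq_sqrt hδ.le, ← pow_mul, mul_comm _ 2, pow_mul]; norm_num,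
      sqrt_sq (by positivity), show δ * (1 / 4) ^ n = (√δ * (1 / 2) ^ n) ^ 2 by
      rw [mul_pow, sq_sqrt hδ.le, ← pow_mul, mul_comm _ 2, pow_mul]; norm_num]
    field_simp
    ring
  have hPsum : Summable fun n => ∫ s in P n, (√s)⁻¹ * g s :=
    (summable_geometric_two.mul_left (2 * M * √δ)).of_nonneg_of_le
      (fun n => setIntegral_nonneg measurableSet_Ioc fun s _ =>
        mul_nonneg (inv_nonneg.2 (sqrt_nonneg s)) (hg0 s)) fun n => (hpiece n).2
  have hint : IntegrableOn (fun s => (√s)⁻¹ * g s) (Ioc 0 δ) := by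
    rw [← hU]
    refine integrableOn_iUnion_of_summable_integral_norm (fun n => (hpiece n).1)
      (hPsum.congr fun n => setIntegral_congr_fun measurableSet_Ioc fun s _ => ?_)
    exact (norm_of_nonneg (mul_nonneg (inv_nonneg.2 (sqrt_nonneg s)) (hg0 s))).symm
  refine ⟨hint, ?_⟩
  have hdisj : Pairwise (Function.onFun Disjoint P) :=
    ((pow_right_anti₀ (by norm_num) (by norm_num)).const_mul hδ.le :
      Antitone fun n : ℕ => δ * (1 / 4 : ℝ) ^ n).pairwise_disjoint_on_Ioc_succ
  calc ∫ s in Ioc 0 δ, (√s)⁻¹ * g s = ∑' n, ∫ s in P n, (√s)⁻¹ * g s := by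
        rw [← hU]; exact integral_iUnion (fun n => measurableSet_Ioc) hdisj (hU ▸ hint)
    _ ≤ ∑' n, 2 * M * √δ * (1 / 2) ^ n :=
        hPsum.tsum_le_tsum (fun n => (hpiece n).2) (summable_geometric_two.mul_left _)
    _ = 4 * M * √δ := by rw [tsum_mul_left, tsum_geometric_two]; ring

lemma integrableOn_mul_and_abs_setIntegral_le {k : ℝ → ℝ} (hk : Measurable k)
    (hg0 : ∀ s, 0 ≤ g s) (hgi : IntegrableOn g (Ioi 0)) {C : ℝ}
    (hlap : ∀ lam, 0 < lam → ∫ s in Ioi 0, exp (-lam * s) * g s ≤ C / lam)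
    {δ μ K L : ℝ} (hδ : 0 < δ) (hμ : 0 ≤ μ) (hK0 : 0 ≤ K) (hL0 : 0 ≤ L)
    (hK : ∀ s ∈ Ioc 0 δ, |k s| ≤ K * (√s)⁻¹) (hL : ∀ s, δ < s → |k s| ≤ L * exp (-μ * s)) :
    IntegrableOn (fun s => k s * g s) (Ioi 0) ∧
      |∫ s in Ioi 0, k s * g s|
        ≤ K * (4 * (exp 1 * C) * √δ) + L * ∫ s in Ioi 0, exp (-μ * s) * g s := by
  obtain ⟨hsing, hsing_le⟩ := integrableOn_inv_sqrt_mul_and_setIntegral_le hg0 hδ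
    (hgi.mono_set Ioc_subset_Ioi_self) fun u hu =>
      setIntegral_Ioc_le_of_laplace_le hg0 hgi hlap hu.1
  have hexp := integrableOn_exp_neg_mul hgi hμ
  have hδ0 : Ioi δ ⊆ Ioi 0 := Ioi_subset_Ioi hδ.le
  have hkg : ∀ t ⊆ Ioi (0 : ℝ), AEStronglyMeasurable (fun s => k s * g s) (volume.restrict t) :=
    fun t ht => hk.aestronglyMeasurable.mul (hgi.mono_set ht).aestronglyMeasurable
  have hnear : ∀ᵐ s ∂volume.restrict (Ioc 0 δ), ‖k s * g s‖ ≤ K * ((√s)⁻¹ * g s) := by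
    filter_upwards [ae_restrict_mem measurableSet_Ioc] with s hs
    rw [norm_mul, norm_of_nonneg (hg0 s), ← mul_assoc]
    exact mul_le_mul_of_nonneg_right (hK s hs) (hg0 s)
  have hfar : ∀ᵐ s ∂volume.restrict (Ioi δ), ‖k s * g s‖ ≤ L * (exp (-μ * s) * g s) := by
    filter_upwards [ae_restrict_mem measurableSet_Ioi] with s hs
    rw [norm_mul, norm_of_nonneg (hg0 s), ← mul_assoc]
    exact mul_le_mul_of_nonneg_right (hL s hs) (hg0 s)
  have hI₁ : IntegrableOn (fun s => k s * g s) (Ioc 0 δ) :=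
    (hsing.const_mul K).mono' (hkg _ Ioc_subset_Ioi_self) hnear
  have hI₂ : IntegrableOn (fun s => k s * g s) (Ioi δ) :=
    ((hexp.mono_set hδ0).const_mul L).mono' (hkg _ hδ0) hfar
  have hU : Ioc 0 δ ∪ Ioi δ = Ioi 0 := Ioc_union_Ioi_eq_Ioi hδ.le
  refine ⟨hU ▸ hI₁.union hI₂, ?_⟩
  calc |∫ s in Ioi 0, k s * g s|
      = |(∫ s in Ioc 0 δ, k s * g s) + ∫ s in Ioi δ, k s * g s| := by
        rw [← setIntegral_union (Ioc_disjoint_Ioi le_rfl) measurableSet_Ioi hI₁ hI₂, hU]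
    _ ≤ (∫ s in Ioc 0 δ, K * ((√s)⁻¹ * g s)) + ∫ s in Ioi δ, L * (exp (-μ * s) * g s) :=
        (abs_add_le _ _).trans (add_le_add
          (norm_integral_le_of_norm_le (hsing.const_mul K) hnear)
          (norm_integral_le_of_norm_le ((hexp.mono_set hδ0).const_mul L) hfar))
    _ ≤ K * (4 * (exp 1 * C) * √δ) + L * ∫ s in Ioi 0, exp (-μ * s) * g s := by
        rw [integral_const_mul, integral_const_mul]
        refine add_le_add (mul_le_mul_of_nonneg_left hsing_le hK0)
          (mul_le_mul_of_nonneg_left (setIntegral_mono_set hexp ?_ hδ0.eventuallyLE) hL0)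
        exact ae_of_all _ fun s => mul_nonneg (exp_pos _).le (hg0 s)

lemma dist_setIntegral_mul_le {h : ℝ → ℝ} (hh : Measurable h) (c : ℝ)
    (hg0 : ∀ s, 0 ≤ g s) (hg1 : ∫ s in Ioi 0, g s = 1) {C : ℝ}
    (hlap : ∀ lam, 0 < lam → ∫ s in Ioi 0, exp (-lam * s) * g s ≤ C / lam)
    {δ μ K L : ℝ} (hδ : 0 < δ) (hμ : 0 ≤ μ) (hK0 : 0 ≤ K) (hL0 : 0 ≤ L)
    (hK : ∀ s ∈ Ioc 0 δ, |h s - c| ≤ K * (√s)⁻¹)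
    (hL : ∀ s, δ < s → |h s - c| ≤ L * exp (-μ * s)) :
    dist (∫ s in Ioi 0, h s * g s) c
      ≤ K * (4 * (exp 1 * C) * √δ) + L * ∫ s in Ioi 0, exp (-μ * s) * g s := by
  have hgi : IntegrableOn g (Ioi 0) := Integrable.of_integral_ne_zero (by simp [hg1])
  obtain ⟨hint, hle⟩ := integrableOn_mul_and_abs_setIntegral_le (k := fun s => h s - c)
    (hh.sub measurable_const) hg0 hgi hlap hδ hμ hK0 hL0 hK hL
  have hsplit : ∫ s in Ioi 0, h s * g s = (∫ s in Ioi 0, (h s - c) * g s) + c := by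
    have := integral_add hint (hgi.const_mul c)
    rw [integral_const_mul, hg1, mul_one] at this
    rw [← this]
    simp only [sub_mul, sub_add_cancel]
  rwa [Real.dist_eq, hsplit, add_sub_cancel_right]

end

theorem stmt10_general (θ : ℝ) (hθ : 0 < θ)
    (f : ℝ → ℝ → ℝ)
    (hf0 : ∀ t s : ℝ, 0 < t → 0 ≤ f t s)
    (hf1 : ∀ t : ℝ, 0 < t → ∫ s in Set.Ioi (0:ℝ), f t s = 1)
    (h1 : ∀ lam : ℝ, 0 < lam →
      Tendsto (fun t => ∫ s in Set.Ioi (0:ℝ), Real.exp (-lam * s) * f t s)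
        atTop (nhds 0))
    (h2 : ∀ lam : ℝ, 0 ≤ lam → ∀ t₁ t₂ : ℝ, 0 < t₁ → t₁ ≤ t₂ →
      ∫ s in Set.Ioi (0:ℝ), Real.exp (-lam * s) * f t₂ s
        ≤ ∫ s in Set.Ioi (0:ℝ), Real.exp (-lam * s) * f t₁ s)
    (h3 : ∃ t₀ : ℝ, 0 < t₀ ∧ ∃ C : ℝ, ∀ lam : ℝ, 0 ≤ lam →
      lam * ∫ s in Set.Ioi (0:ℝ), Real.exp (-lam * s) * f t₀ s ≤ C) :
    ∀ x y : ℝ,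
      Tendsto (fun t => ∫ s in Set.Ioi (0:ℝ), ouKernel θ s x y * f t s)
        atTop (nhds (gauss x)) := by
  obtain ⟨t₀, ht₀, C, hC⟩ := h3
  have hlap : ∀ t, t₀ ≤ t → ∀ lam, 0 < lam → ∫ s in Ioi 0, exp (-lam * s) * f t s ≤ C / lam :=
    fun t ht lam hlam => (h2 lam hlam.le t₀ t ht₀ ht).trans ((le_div_iff₀' hlam).2 (hC lam hlam.le))
  intro x y
  obtain ⟨K, hK0, hK⟩ := exists_abs_ouKernel_sub_gauss_le_mul_inv_sqrt hθ x y
  refine Metric.tendsto_nhds.2 fun ε hε => ?_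
  have hK_lim : Tendsto (fun δ => K * (4 * (exp 1 * C) * √δ)) (𝓝[>] 0) (𝓝 0) := by
    simpa using (((continuous_sqrt.tendsto 0).const_mul (4 * (exp 1 * C))).const_mul K).mono_left
      nhdsWithin_le_nhds
  obtain ⟨δ, hδε, hδ, hδ1⟩ :=
    ((hK_lim.eventually (gt_mem_nhds (half_pos hε))).and (Ioc_mem_nhdsGT one_pos)).exists
  obtain ⟨L, hL0, hL⟩ := exists_abs_ouKernel_sub_gauss_le hθ hδ x y
  have hL_lim : ∀ᶠ t in atTop, L * ∫ s in Ioi 0, exp (-θ * s) * f t s < ε / 2 := by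
    have := (h1 θ hθ).const_mul L
    rw [mul_zero] at this
    exact this.eventually (gt_mem_nhds (half_pos hε))
  filter_upwards [hL_lim, eventually_ge_atTop t₀] with t hLε ht
  have ht0 : 0 < t := ht₀.trans_le ht
  calc dist (∫ s in Ioi 0, ouKernel θ s x y * f t s) (gauss x)
      ≤ K * (4 * (exp 1 * C) * √δ) + L * ∫ s in Ioi 0, exp (-θ * s) * f t s :=
        dist_setIntegral_mul_le (by unfold ouKernel; fun_prop) (gauss x) (fun s => hf0 t s ht0)
          (hf1 t ht0) (hlap t ht) hδ hθ.le hK0 hL0 (fun s hs => hK s ⟨hs.1, hs.2.trans hδ1⟩)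
          (fun s hs => hL s hs.le)
    _ < ε / 2 + ε / 2 := add_lt_add hδε hLε
    _ = ε := add_halves ε

/-- **Limit distribution of the time-changed Ornstein–Uhlenbeck process.**
Fix `θ > 0` and for each `t > 0` let `f t` be a probability density on `(0,∞)`, with
`𝔢(t,λ) = ∫₀^∞ e^{−λs} f t s ds`. Assume (i) for each `λ > 0`, `𝔢(t,λ) → 0` as
`t → ∞`; (ii) for each `λ ≥ 0`, `t ↦ 𝔢(t,λ)` is nonincreasing; (iii) there is
`t₀ > 0` with `sup_{λ ≥ 0} λ·𝔢(t₀,λ) < ∞`. Then for all `x, y ∈ ℝ`,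
`∫₀^∞ p(s,x,y) f t s ds → m(x)` as `t → ∞`. -/
theorem stmt10 (θ : ℝ) (hθ : 0 < θ)
    (f : ℝ → ℝ → ℝ)
    (hfmeas : ∀ t : ℝ, 0 < t → Measurable (f t))
    (hf0 : ∀ t s : ℝ, 0 < t → 0 ≤ f t s)
    (hf1 : ∀ t : ℝ, 0 < t → ∫ s in Set.Ioi (0:ℝ), f t s = 1)
    (h1 : ∀ lam : ℝ, 0 < lam →
      Tendsto (fun t => ∫ s in Set.Ioi (0:ℝ), Real.exp (-lam * s) * f t s)
        atTop (nhds 0))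
    (h2 : ∀ lam : ℝ, 0 ≤ lam → ∀ t₁ t₂ : ℝ, 0 < t₁ → t₁ ≤ t₂ →
      ∫ s in Set.Ioi (0:ℝ), Real.exp (-lam * s) * f t₂ s
        ≤ ∫ s in Set.Ioi (0:ℝ), Real.exp (-lam * s) * f t₁ s)
    (h3 : ∃ t₀ : ℝ, 0 < t₀ ∧ ∃ C : ℝ, ∀ lam : ℝ, 0 ≤ lam →
      lam * ∫ s in Set.Ioi (0:ℝ), Real.exp (-lam * s) * f t₀ s ≤ C) :
    ∀ x y : ℝ,
      Tendsto (fun t => ∫ s in Set.Ioi (0:ℝ), ouKernel θ s x y * f t s)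
        atTop (nhds (gauss x)) :=
  stmt10_general θ hθ f hf0 hf1 h1 h2 h3
end

section
/- Let ν̄ : (0,∞) → [0,∞) be nonincreasing with ∫₀^1 ν̄(s) ds < ∞. Let (λ_n)_{n≥0} be nonnegative reals, (c_n)_{n≥0} real numbers with Σ_{n≥0} |c_n| < ∞, and for each n let e_n : [0,∞) → [0,1] be continuous with e_n(0) = 1 such that for every t > 0 the function t ↦ ∫₀^t (e_n(τ) − 1) ν̄(t−τ) dτ is differentiable with derivative −λ_n e_n(t). Assume moreover that for every t₀ > 0, sup{λ_n e_n(t) : n ≥ 0, t ≥ t₀} < ∞. Then the function u(t) = Σ_{n≥0} c_n e_n(t) is well defined, and for every t > 0 the function t ↦ ∫₀^t (u(τ) − u(0)) ν̄(t−τ) dτ is differentiable with derivative −Σ_{n≥0} λ_n c_n e_n(t), that is, the non-local derivative ∂_t^Φ may be applied to the series term by term. -/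
/-!
Writing `u(τ) - u(0) = Σₙ cₙ (eₙ(τ) - 1)` with `|eₙ(τ) - 1| ≤ 1`, the series is dominated by
`(Σₙ |cₙ|) |ν̄(t - τ)|`, which is integrable because a nonincreasing function integrable near `0`
is integrable on every `(0, t]`. Dominated convergence therefore makes the convolution integral of
`u - u(0)` the series of the convolution integrals of the `eₙ - 1`. On `(t/2, ∞)` the derivatives
`-λₙ cₙ eₙ` of the terms are bounded by `C |cₙ|` (the uniform bound with `t₀ = t/2`), so the
series may be differentiated term by term on a neighbourhood of `t`.
-/

open MeasureTheory Set
open scoped Interval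

theorem summable_mul_of_abs_le {ι : Type*} {c f : ι → ℝ} {M : ℝ}
    (hc : Summable fun n => |c n|) (hf : ∀ n, |f n| ≤ M) :
    Summable fun n => c n * f n :=
  .of_norm_bounded (hc.mul_right M) fun n => by
    rw [Real.norm_eq_abs, abs_mul]
    exact mul_le_mul_of_nonneg_left (hf n) (abs_nonneg _)

theorem AntitoneOn.integrableOn_Ioc_zero {f : ℝ → ℝ} (hf : AntitoneOn f (Ioi 0))
    (h₁ : IntegrableOn f (Ioc 0 1)) (y : ℝ) : IntegrableOn f (Ioc 0 y) := by
  rcases le_or_gt y 1 with hy | hy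
  · exact h₁.mono_set (Ioc_subset_Ioc_right hy)
  · have h₂ : IntegrableOn f (Icc 1 y) :=
      (hf.mono fun x hx => one_pos.trans_le hx.1).integrableOn_isCompact isCompact_Icc
    refine (h₁.union h₂).mono_set fun x hx => ?_
    rcases le_or_gt x 1 with hx1 | hx1
    · exact Or.inl ⟨hx.1, hx1⟩
    · exact Or.inr ⟨hx1.le, hx.2⟩

theorem AntitoneOn.intervalIntegrable_comp_sub_left {f : ℝ → ℝ} (hf : AntitoneOn f (Ioi 0))
    (h₁ : IntegrableOn f (Ioc 0 1)) {y : ℝ} (hy : 0 ≤ y) :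
    IntervalIntegrable (fun τ => f (y - τ)) volume 0 y := by
  have h := ((intervalIntegrable_iff_integrableOn_Ioc_of_le hy).2
    (hf.integrableOn_Ioc_zero h₁ y)).comp_sub_left y
  rw [sub_zero, sub_self] at h
  exact h.symm

theorem hasSum_intervalIntegral_tsum_mul {ι : Type*} [Countable ι] {μ : Measure ℝ} {a b M : ℝ}
    {k : ℝ → ℝ} (hk : IntervalIntegrable k μ a b) {c : ι → ℝ} (hc : Summable fun n => |c n|)
    {f : ι → ℝ → ℝ} (hf_meas : ∀ n, AEStronglyMeasurable (f n) (μ.restrict (Ι a b)))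
    (hf_bound : ∀ n, ∀ τ ∈ Ι a b, |f n τ| ≤ M) :
    HasSum (fun n => c n * ∫ τ in a..b, f n τ * k τ ∂μ)
      (∫ τ in a..b, (∑' n, c n * f n τ) * k τ ∂μ) := by
  simp only [← intervalIntegral.integral_const_mul, ← tsum_mul_right, mul_assoc]
  refine intervalIntegral.hasSum_integral_of_dominated_convergence
    (fun n τ => |c n| * (M * |k τ|))
    (fun n => ((hf_meas n).mul hk.def'.aestronglyMeasurable).const_mul (c n))
    (fun n => ae_of_all _ fun τ hτ => ?_) (ae_of_all _ fun _ _ => hc.mul_right _) ?_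
    (ae_of_all _ fun τ hτ => ?_)
  · rw [Real.norm_eq_abs, abs_mul, abs_mul]
    exact mul_le_mul_of_nonneg_left
      (mul_le_mul_of_nonneg_right (hf_bound n τ hτ) (abs_nonneg _)) (abs_nonneg _)
  · simp only [tsum_mul_right]
    exact (hk.abs.const_mul M).const_mul _
  · have hs := summable_mul_of_abs_le hc fun n => hf_bound n τ hτ
    simpa only [← mul_assoc] using (hs.mul_right (k τ)).hasSum

theorem hasSum_convolution_tsum {nu : ℝ → ℝ} (hnumono : AntitoneOn nu (Ioi 0))
    (hnuint : IntegrableOn nu (Ioc 0 1)) {c : ℕ → ℝ} (hc : Summable fun n => |c n|)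
    {e : ℕ → ℝ → ℝ} (hecont : ∀ n, ContinuousOn (e n) (Ici 0))
    (he01 : ∀ n, ∀ t : ℝ, 0 ≤ t → e n t ∈ Icc (0:ℝ) 1) (he0 : ∀ n, e n 0 = 1)
    {y : ℝ} (hy : 0 ≤ y) :
    HasSum (fun n => c n * ∫ τ in (0:ℝ)..y, (e n τ - 1) * nu (y - τ))
      (∫ τ in (0:ℝ)..y, ((∑' n, c n * e n τ) - ∑' n, c n * e n 0) * nu (y - τ)) := by
  have hsum : ∀ τ, 0 ≤ τ → Summable fun n => c n * e n τ := fun τ hτ =>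
    summable_mul_of_abs_le hc fun n => (abs_of_nonneg (he01 n τ hτ).1).trans_le (he01 n τ hτ).2
  have hseries : EqOn (fun τ => ((∑' n, c n * e n τ) - ∑' n, c n * e n 0) * nu (y - τ))
      (fun τ => (∑' n, c n * (e n τ - 1)) * nu (y - τ)) (uIcc 0 y) := fun τ hτ => by
    rw [uIcc_of_le hy] at hτ
    have h := (hsum τ hτ.1).tsum_sub (hsum 0 le_rfl)
    simp only [he0, mul_sub, mul_one] at h ⊢
    rw [h]
  rw [intervalIntegral.integral_congr hseries]
  refine hasSum_intervalIntegral_tsum_mul (M := 1)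
    (hnumono.intervalIntegrable_comp_sub_left hnuint hy) hc (fun n => ?_) fun n τ hτ => ?_
  · rw [uIoc_of_le hy]
    exact (((hecont n).mono fun τ hτ => hτ.1.le).aestronglyMeasurable
      measurableSet_Ioc).sub aestronglyMeasurable_const
  · rw [uIoc_of_le hy] at hτ
    exact abs_sub_le_of_nonneg_of_le (he01 n τ hτ.1.le).1 (he01 n τ hτ.1.le).2 zero_le_one le_rfl

theorem stmt11_general
    (nu : ℝ → ℝ)
    (hnumono : AntitoneOn nu (Set.Ioi 0))
    (hnuint : IntegrableOn nu (Set.Ioc 0 1))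
    (lam : ℕ → ℝ) (hlam : ∀ n, 0 ≤ lam n)
    (c : ℕ → ℝ) (hc : Summable fun n => |c n|)
    (e : ℕ → ℝ → ℝ)
    (hecont : ∀ n, ContinuousOn (e n) (Set.Ici 0))
    (he01 : ∀ n, ∀ t : ℝ, 0 ≤ t → e n t ∈ Set.Icc (0:ℝ) 1)
    (he0 : ∀ n, e n 0 = 1)
    (hederiv : ∀ n, ∀ t : ℝ, 0 < t →
      HasDerivAt (fun r => ∫ τ in (0:ℝ)..r, (e n τ - 1) * nu (r - τ))
        (-(lam n) * e n t) t)
    (hunif : ∀ t₀ : ℝ, 0 < t₀ → ∃ C : ℝ, ∀ n, ∀ t : ℝ, t₀ ≤ t → lam n * e n t ≤ C) :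
    (∀ t : ℝ, 0 ≤ t → Summable fun n => c n * e n t) ∧
    ∀ t : ℝ, 0 < t →
      (Summable fun n => lam n * c n * e n t) ∧
      HasDerivAt
        (fun r => ∫ τ in (0:ℝ)..r,
          ((∑' n, c n * e n τ) - ∑' n, c n * e n 0) * nu (r - τ))
        (-∑' n, lam n * c n * e n t) t := by
  have hconv := fun y (hy : 0 ≤ y) => hasSum_convolution_tsum hnumono hnuint hc hecont he01 he0 hy
  refine ⟨fun t ht => summable_mul_of_abs_le hc fun n =>
    (abs_of_nonneg (he01 n t ht).1).trans_le (he01 n t ht).2, fun t ht => ?_⟩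
  obtain ⟨C, hC⟩ := hunif (t / 2) (half_pos ht)
  have hbound : ∀ n y, t / 2 ≤ y → |lam n * e n y| ≤ C := fun n y hy =>
    (abs_of_nonneg (mul_nonneg (hlam n) (he01 n y (by linarith)).1)).trans_le (hC n y hy)
  refine ⟨(summable_mul_of_abs_le hc fun n => hbound n t (half_le_self ht.le)).congr
    fun n => by ring, ?_⟩
  have hseries := hasDerivAt_tsum_of_isPreconnected (hc.mul_right C) isOpen_Ioi isPreconnected_Ioi
    (g := fun n z => c n * ∫ τ in (0:ℝ)..z, (e n τ - 1) * nu (z - τ))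
    (g' := fun n y => c n * (-(lam n) * e n y))
    (fun n y hy => (hederiv n y ((half_pos ht).trans hy)).const_mul (c n))
    (fun n y hy => by
      rw [Real.norm_eq_abs, abs_mul, neg_mul, abs_neg]
      exact mul_le_mul_of_nonneg_left (hbound n y (le_of_lt hy)) (abs_nonneg _))
    (mem_Ioi.2 (half_lt_self ht)) (hconv t ht.le).summable (mem_Ioi.2 (half_lt_self ht))
  rw [show (∑' n, c n * (-(lam n) * e n t)) = -∑' n, lam n * c n * e n t by
    rw [← tsum_neg]; congr 1; funext n; ring] at hseries
  refine hseries.congr_of_eventuallyEq ?_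
  filter_upwards [isOpen_Ioi.mem_nhds (mem_Ioi.2 ht)] with y hy
  exact (hconv y (le_of_lt hy)).tsum_eq.symm

/-- **Termwise application of the non-local convolution derivative.**
Let `ν̄ : (0,∞) → [0,∞)` be nonincreasing with `∫₀^1 ν̄ < ∞`, let `λₙ ≥ 0`, let
`(cₙ)` be absolutely summable, and for each `n` let `eₙ : [0,∞) → [0,1]` be continuous
with `eₙ(0) = 1` and such that `t ↦ ∫₀^t (eₙ(τ) − 1) ν̄(t−τ) dτ` has derivative
`−λₙ eₙ(t)` at each `t > 0`; assume `sup {λₙ eₙ(t) : n, t ≥ t₀} < ∞` for each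
`t₀ > 0`. Then `u(t) = Σₙ cₙ eₙ(t)` is well defined and for every `t > 0` the function
`t ↦ ∫₀^t (u(τ) − u(0)) ν̄(t−τ) dτ` has derivative `−Σₙ λₙ cₙ eₙ(t)`, i.e. the
non-local derivative may be applied term by term. -/
theorem stmt11
    (nu : ℝ → ℝ) (hnu0 : ∀ s : ℝ, 0 < s → 0 ≤ nu s)
    (hnumono : AntitoneOn nu (Set.Ioi 0))
    (hnuint : IntegrableOn nu (Set.Ioc 0 1))
    (lam : ℕ → ℝ) (hlam : ∀ n, 0 ≤ lam n)
    (c : ℕ → ℝ) (hc : Summable fun n => |c n|)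
    (e : ℕ → ℝ → ℝ)
    (hecont : ∀ n, ContinuousOn (e n) (Set.Ici 0))
    (he01 : ∀ n, ∀ t : ℝ, 0 ≤ t → e n t ∈ Set.Icc (0:ℝ) 1)
    (he0 : ∀ n, e n 0 = 1)
    (hederiv : ∀ n, ∀ t : ℝ, 0 < t →
      HasDerivAt (fun r => ∫ τ in (0:ℝ)..r, (e n τ - 1) * nu (r - τ))
        (-(lam n) * e n t) t)
    (hunif : ∀ t₀ : ℝ, 0 < t₀ → ∃ C : ℝ, ∀ n, ∀ t : ℝ, t₀ ≤ t → lam n * e n t ≤ C) :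
    (∀ t : ℝ, 0 ≤ t → Summable fun n => c n * e n t) ∧
    ∀ t : ℝ, 0 < t →
      (Summable fun n => lam n * c n * e n t) ∧
      HasDerivAt
        (fun r => ∫ τ in (0:ℝ)..r,
          ((∑' n, c n * e n τ) - ∑' n, c n * e n 0) * nu (r - τ))
        (-∑' n, lam n * c n * e n t) t :=
  stmt11_general nu hnumono hnuint lam hlam c hc e hecont he01 he0 hederiv hunif
end
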